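/- arXiv:2603.08320 — 5 statements merged into one kernel-verified Lean document; each statement's English description precedes it below -/
import Mathlib

section
/- Let h_X and h_Y be support profiles. Then the integrated covariance of the full support profiles involves no cross-terms: ∫_{S^{d-1}} Cov(h_X(·,u), h_Y(·,u)) dσ(u) = Cov_size(X,Y) + Cov_loc(X,Y). In particular, ∫_{S^{d-1}} Var(h_X(·,u)) dσ(u) = Var_size(X) + Var_loc(X). -/
open MeasureTheory
open scoped RealInnerProductSpace

noncomputable section

/-- The unit sphere `S^{d-1}` in Euclidean space `ℝ^d`. -/
abbrev Sph (d : ℕ) := Metric.sphere (0 : EuclideanSpace ℝ (Fin d)) 1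

/-- Covariance of two real random variables w.r.t. a measure `P`. -/
def cov' {Ω : Type*} [MeasurableSpace Ω] (P : Measure Ω) (X Y : Ω → ℝ) : ℝ :=
  ∫ ω, (X ω - ∫ x, X x ∂P) * (Y ω - ∫ x, Y x ∂P) ∂P

/-- Variance of a real random variable w.r.t. a measure `P`. -/
def var' {Ω : Type*} [MeasurableSpace Ω] (P : Measure Ω) (X : Ω → ℝ) : ℝ := cov' P X X

/-- Size (even) component of a support profile. -/
def evenPart {Ω : Type*} {d : ℕ} (h : Ω × Sph d → ℝ) : Ω × Sph d → ℝ :=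
  fun p => (h p + h (p.1, -p.2)) / 2

/-- Location (odd) component of a support profile. -/
def oddPart {Ω : Type*} {d : ℕ} (h : Ω × Sph d → ℝ) : Ω × Sph d → ℝ :=
  fun p => (h p - h (p.1, -p.2)) / 2

/-- Size covariance `Cov_size(X,Y)`. -/
def covSize {Ω : Type*} [MeasurableSpace Ω] {d : ℕ} (P : Measure Ω) (σ : Measure (Sph d))
    (hX hY : Ω × Sph d → ℝ) : ℝ :=
  ∫ u, cov' P (fun ω => evenPart hX (ω, u)) (fun ω => evenPart hY (ω, u)) ∂σ

/-- Location covariance `Cov_loc(X,Y)`. -/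
def covLoc {Ω : Type*} [MeasurableSpace Ω] {d : ℕ} (P : Measure Ω) (σ : Measure (Sph d))
    (hX hY : Ω × Sph d → ℝ) : ℝ :=
  ∫ u, cov' P (fun ω => oddPart hX (ω, u)) (fun ω => oddPart hY (ω, u)) ∂σ

/-- Total covariance `Cov_tot(X,Y)`. -/
def covTot {Ω : Type*} [MeasurableSpace Ω] {d : ℕ} (P : Measure Ω) (σ : Measure (Sph d))
    (hX hY : Ω × Sph d → ℝ) : ℝ :=
  covSize P σ hX hY + covLoc P σ hX hY

/-- `Var_size(X)`. -/
def varSize {Ω : Type*} [MeasurableSpace Ω] {d : ℕ} (P : Measure Ω) (σ : Measure (Sph d))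
    (hX : Ω × Sph d → ℝ) : ℝ := covSize P σ hX hX

/-- `Var_loc(X)`. -/
def varLoc {Ω : Type*} [MeasurableSpace Ω] {d : ℕ} (P : Measure Ω) (σ : Measure (Sph d))
    (hX : Ω × Sph d → ℝ) : ℝ := covLoc P σ hX hX

/-- `Var_tot(X)`. -/
def varTot {Ω : Type*} [MeasurableSpace Ω] {d : ℕ} (P : Measure Ω) (σ : Measure (Sph d))
    (hX : Ω × Sph d → ℝ) : ℝ := varSize P σ hX + varLoc P σ hX

/-- A support profile: jointly measurable and square-integrable against `P ⊗ σ`. -/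
def IsSupportProfile {Ω : Type*} [MeasurableSpace Ω] {d : ℕ} (P : Measure Ω)
    (σ : Measure (Sph d)) (h : Ω × Sph d → ℝ) : Prop :=
  Measurable h ∧ Integrable (fun p => (h p) ^ 2) (P.prod σ)
/-! For each direction `u`, covariance is bilinear on `L²(P)`, so with `a = h_X(·,u)`,
`b = h_X(·,-u)` (and `c`, `e` likewise for `h_Y`) the cross terms cancel:
`Cov((a+b)/2, (c+e)/2) + Cov((a-b)/2, (c-e)/2) = (Cov(a,c) + Cov(b,e))/2`.
Integrating over the antipodally invariant `σ` turns the right-hand side into the integrated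
covariance of the full profiles. All the integrals involved exist because
`2|Cov(a,c)| ≤ Var a + Var c ≤ 𝔼a² + 𝔼c²`, which is integrable in `u` by Fubini. -/

open MeasureTheory ProbabilityTheory

namespace ProbabilityTheory

variable {Ω : Type*} {mΩ : MeasurableSpace Ω} {μ : Measure Ω} {X Y Z T : Ω → ℝ}

lemma two_mul_abs_covariance_le [IsFiniteMeasure μ] (hX : MemLp X 2 μ) (hY : MemLp Y 2 μ) :
    2 * |cov[X, Y; μ]| ≤ Var[X; μ] + Var[Y; μ] := by
  have hadd := variance_add hX hY
  have hsub := variance_sub hX hY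
  have := variance_nonneg (X + Y) μ
  have := variance_nonneg (X - Y) μ
  cases abs_cases cov[X, Y; μ] <;> linarith

lemma covariance_half_add_add_covariance_half_sub [IsFiniteMeasure μ] (hX : MemLp X 2 μ)
    (hY : MemLp Y 2 μ) (hZ : MemLp Z 2 μ) (hT : MemLp T 2 μ) :
    cov[fun ω ↦ (X ω + Y ω) / 2, fun ω ↦ (Z ω + T ω) / 2; μ]
      + cov[fun ω ↦ (X ω - Y ω) / 2, fun ω ↦ (Z ω - T ω) / 2; μ]
      = (cov[X, Z; μ] + cov[Y, T; μ]) / 2 := by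
  rw [covariance_fun_div_left (X := fun ω ↦ X ω + Y ω),
    covariance_fun_div_right (Y := fun ω ↦ Z ω + T ω),
    covariance_fun_div_left (X := fun ω ↦ X ω - Y ω),
    covariance_fun_div_right (Y := fun ω ↦ Z ω - T ω)]
  have hplus : cov[fun ω ↦ X ω + Y ω, fun ω ↦ Z ω + T ω; μ]
      = cov[X, Z; μ] + cov[X, T; μ] + cov[Y, Z; μ] + cov[Y, T; μ] := by
    change cov[X + Y, Z + T; μ] = _
    rw [covariance_add_left hX hY (hZ.add hT), covariance_add_right hX hZ hT,
      covariance_add_right hY hZ hT]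
    ring
  rw [hplus, covariance_fun_sub_fun_sub hX hY hZ hT]
  ring

end ProbabilityTheory

section Sections

variable {Ω α : Type*} {mΩ : MeasurableSpace Ω} {mα : MeasurableSpace α}
  {μ : Measure Ω} {ν : Measure α} {k l : Ω × α → ℝ}

lemma ae_memLp_two_section [SFinite μ] [SFinite ν] (hk : Measurable k)
    (hk2 : MemLp k 2 (μ.prod ν)) :
    ∀ᵐ u ∂ν, MemLp (fun ω ↦ k (ω, u)) 2 μ := by
  filter_upwards [((memLp_two_iff_integrable_sq hk2.1).mp hk2).prod_left_ae] with u hu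
  exact (memLp_two_iff_integrable_sq (hk.comp measurable_prodMk_right).aestronglyMeasurable).mpr hu

lemma stronglyMeasurable_covariance_section [SFinite μ] (hk : Measurable k) (hl : Measurable l) :
    StronglyMeasurable (fun u ↦ cov[fun ω ↦ k (ω, u), fun ω ↦ l (ω, u); μ]) := by
  have hmean : ∀ {f : Ω × α → ℝ}, Measurable f →
      StronglyMeasurable (fun p : Ω × α ↦ f p - ∫ ω, f (ω, p.2) ∂μ) := fun hf ↦
    hf.stronglyMeasurable.sub
      (hf.stronglyMeasurable.integral_prod_left'.comp_measurable measurable_snd)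
  exact ((hmean hk).mul (hmean hl)).integral_prod_left'

lemma integrable_covariance_section [IsProbabilityMeasure μ] [SFinite ν]
    (hk : Measurable k) (hk2 : MemLp k 2 (μ.prod ν))
    (hl : Measurable l) (hl2 : MemLp l 2 (μ.prod ν)) :
    Integrable (fun u ↦ cov[fun ω ↦ k (ω, u), fun ω ↦ l (ω, u); μ]) ν := by
  have hsq : ∀ {f : Ω × α → ℝ}, MemLp f 2 (μ.prod ν) →
      Integrable (fun u ↦ ∫ ω, f (ω, u) ^ 2 ∂μ) ν := fun hf ↦
    ((memLp_two_iff_integrable_sq hf.1).mp hf).integral_prod_right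
  refine ((hsq hk2).add (hsq hl2)).mono'
    (stronglyMeasurable_covariance_section hk hl).aestronglyMeasurable ?_
  filter_upwards [ae_memLp_two_section hk hk2, ae_memLp_two_section hl hl2] with u hku hlu
  have hcov := two_mul_abs_covariance_le hku hlu
  have hvk := variance_le_expectation_sq hku.1
  have hvl := variance_le_expectation_sq hlu.1
  have := abs_nonneg cov[fun ω ↦ k (ω, u), fun ω ↦ l (ω, u); μ]
  simp only [Pi.pow_apply] at hvk hvl
  rw [Pi.add_apply, Real.norm_eq_abs]
  linarith

end Sections

namespace IsSupportProfile

variable {Ω : Type*} [MeasurableSpace Ω] {d : ℕ} {P : Measure Ω} {σ : Measure (Sph d)}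
  {h k l : Ω × Sph d → ℝ}

lemma memLp (hh : IsSupportProfile P σ h) : MemLp h 2 (P.prod σ) :=
  (memLp_two_iff_integrable_sq hh.1.aestronglyMeasurable).mpr hh.2

lemma of_memLp (hm : Measurable h) (h2 : MemLp h 2 (P.prod σ)) : IsSupportProfile P σ h :=
  ⟨hm, (memLp_two_iff_integrable_sq hm.aestronglyMeasurable).mp h2⟩

lemma ae_memLp_section [SFinite P] [SFinite σ] (hh : IsSupportProfile P σ h) :
    ∀ᵐ u ∂σ, MemLp (fun ω ↦ h (ω, u)) 2 P :=
  ae_memLp_two_section hh.1 hh.memLp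

lemma integrable_covariance_section [IsProbabilityMeasure P] [SFinite σ]
    (hk : IsSupportProfile P σ k) (hl : IsSupportProfile P σ l) :
    Integrable (fun u ↦ cov[fun ω ↦ k (ω, u), fun ω ↦ l (ω, u); P]) σ :=
  _root_.integrable_covariance_section hk.1 hk.memLp hl.1 hl.memLp

lemma comp_neg [SFinite P] [SFinite σ] (hσ : MeasurePreserving (fun u : Sph d ↦ -u) σ σ)
    (hh : IsSupportProfile P σ h) : IsSupportProfile P σ (fun p ↦ h (p.1, -p.2)) :=
  of_memLp (hh.1.comp (measurable_fst.prodMk (measurable_neg.comp measurable_snd)))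
    (hh.memLp.comp_measurePreserving ((MeasurePreserving.id P).prod hσ))

lemma evenPart [SFinite P] [SFinite σ] (hσ : MeasurePreserving (fun u : Sph d ↦ -u) σ σ)
    (hh : IsSupportProfile P σ h) : IsSupportProfile P σ (evenPart h) := by
  have hneg := hh.comp_neg hσ
  refine of_memLp ((hh.1.add hneg.1).div_const 2) ?_
  unfold _root_.evenPart
  simpa only [div_eq_mul_inv, Pi.add_apply] using (hh.memLp.add hneg.memLp).mul_const (2⁻¹ : ℝ)

lemma oddPart [SFinite P] [SFinite σ] (hσ : MeasurePreserving (fun u : Sph d ↦ -u) σ σ)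
    (hh : IsSupportProfile P σ h) : IsSupportProfile P σ (oddPart h) := by
  have hneg := hh.comp_neg hσ
  refine of_memLp ((hh.1.sub hneg.1).div_const 2) ?_
  unfold _root_.oddPart
  simpa only [div_eq_mul_inv, Pi.sub_apply] using (hh.memLp.sub hneg.memLp).mul_const (2⁻¹ : ℝ)

end IsSupportProfile

lemma cov'_eq_covariance {Ω : Type*} [MeasurableSpace Ω] (P : Measure Ω) (X Y : Ω → ℝ) :
    cov' P X Y = cov[X, Y; P] :=
  rfl

theorem integral_cov'_eq_covSize_add_covLoc {Ω : Type*} [MeasurableSpace Ω] {d : ℕ}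
    {P : Measure Ω} [IsProbabilityMeasure P] {σ : Measure (Sph d)} [SFinite σ]
    (hσ : MeasurePreserving (fun u : Sph d ↦ -u) σ σ) {k l : Ω × Sph d → ℝ}
    (hk : IsSupportProfile P σ k) (hl : IsSupportProfile P σ l) :
    ∫ u, cov' P (fun ω ↦ k (ω, u)) (fun ω ↦ l (ω, u)) ∂σ
      = covSize P σ k l + covLoc P σ k l := by
  set F := fun u ↦ cov[fun ω ↦ k (ω, u), fun ω ↦ l (ω, u); P]
  have hk' := hk.comp_neg hσ
  have hl' := hl.comp_neg hσ
  have hpointwise : ∀ᵐ u ∂σ,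
      cov[fun ω ↦ evenPart k (ω, u), fun ω ↦ evenPart l (ω, u); P]
        + cov[fun ω ↦ oddPart k (ω, u), fun ω ↦ oddPart l (ω, u); P]
        = (F u + F (-u)) / 2 := by
    filter_upwards [hk.ae_memLp_section, hk'.ae_memLp_section, hl.ae_memLp_section,
      hl'.ae_memLp_section] with u hku hku' hlu hlu'
    exact covariance_half_add_add_covariance_half_sub hku hku' hlu hlu'
  have hsymm : ∫ u, F (-u) ∂σ = ∫ u, F u ∂σ :=
    hσ.integral_comp' (f := MeasurableEquiv.neg (Sph d)) F
  simp only [covSize, covLoc, cov'_eq_covariance]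
  calc ∫ u, F u ∂σ
      = ((∫ u, F u ∂σ) + ∫ u, F (-u) ∂σ) / 2 := by
        rw [hsymm]
        ring
    _ = ∫ u, (F u + F (-u)) / 2 ∂σ := by
        rw [integral_div, integral_add (hk.integrable_covariance_section hl)
          (hk'.integrable_covariance_section hl')]
    _ = _ := by
        rw [← integral_add ((hk.evenPart hσ).integrable_covariance_section (hl.evenPart hσ))
          ((hk.oddPart hσ).integrable_covariance_section (hl.oddPart hσ))]
        exact (integral_congr_ae hpointwise).symm

theorem covTot_no_cross_terms_general {Ω : Type*} [MeasurableSpace Ω] {d : ℕ}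
    (P : Measure Ω) [IsProbabilityMeasure P]
    (σ : Measure (Sph d)) [IsProbabilityMeasure σ]
    (hσinv : Measure.map (fun u : Sph d => -u) σ = σ)
    (hX hY : Ω × Sph d → ℝ)
    (hXprof : IsSupportProfile P σ hX) (hYprof : IsSupportProfile P σ hY) :
    (∫ u, cov' P (fun ω => hX (ω, u)) (fun ω => hY (ω, u)) ∂σ
        = covSize P σ hX hY + covLoc P σ hX hY)
    ∧ (∫ u, var' P (fun ω => hX (ω, u)) ∂σ = varSize P σ hX + varLoc P σ hX) :=
  have hσ : MeasurePreserving (fun u : Sph d ↦ -u) σ σ := ⟨measurable_neg, hσinv⟩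
  ⟨integral_cov'_eq_covSize_add_covLoc hσ hXprof hYprof,
    integral_cov'_eq_covSize_add_covLoc hσ hXprof hXprof⟩

/-- Additivity, no cross-terms: the integrated covariance of the full
support profiles splits exactly into size and location covariances; in particular the
integrated variance splits into `Var_size + Var_loc`. -/
theorem covTot_no_cross_terms {Ω : Type*} [MeasurableSpace Ω] {d : ℕ} (hd : 0 < d)
    (P : Measure Ω) [IsProbabilityMeasure P]
    (σ : Measure (Sph d)) [IsProbabilityMeasure σ]
    (hσinv : Measure.map (fun u : Sph d => -u) σ = σ)
    (hX hY : Ω × Sph d → ℝ)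
    (hXprof : IsSupportProfile P σ hX) (hYprof : IsSupportProfile P σ hY) :
    (∫ u, cov' P (fun ω => hX (ω, u)) (fun ω => hY (ω, u)) ∂σ
        = covSize P σ hX hY + covLoc P σ hX hY)
    ∧ (∫ u, var' P (fun ω => hX (ω, u)) ∂σ = varSize P σ hX + varLoc P σ hX) :=
  covTot_no_cross_terms_general P σ hσinv hX hY hXprof hYprof

end
end

section
/- Singleton case, covariance: let ξ, η : Ω → ℝ^d be random vectors with 𝔼‖ξ‖² + 𝔼‖η‖² < ∞. Then ∫_{S^{d-1}} Cov(⟨u,ξ⟩, ⟨u,η⟩) dσ(u) = (1/d)·∑_{i=1}^d Cov(ξ_i, η_i), where ξ_i, η_i denote the standard coordinates. Consequently, for the singleton support profiles h_X(ω,u) = ⟨u,ξ(ω)⟩ and h_Y(ω,u) = ⟨u,η(ω)⟩ one has Cov_loc(X,Y) = (1/d)·∑_i Cov(ξ_i,η_i), and if ∑_i Var(ξ_i) > 0 and ∑_i Var(η_i) > 0 then Corr_loc(X,Y) = ∑_i Cov(ξ_i,η_i) / √((∑_i Var(ξ_i))·(∑_i Var(η_i))). -/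
open MeasureTheory
open scoped RealInnerProductSpace

noncomputable section

/-- `Corr_loc(X,Y)`. -/
def corrLoc {Ω : Type*} [MeasurableSpace Ω] {d : ℕ} (P : Measure Ω) (σ : Measure (Sph d))
    (hX hY : Ω × Sph d → ℝ) : ℝ :=
  covLoc P σ hX hY / Real.sqrt (varLoc P σ hX * varLoc P σ hY)

/-- The map induced on the unit sphere by a linear isometric equivalence of `ℝ^d`. -/
def sphereIso {d : ℕ} (L : EuclideanSpace ℝ (Fin d) ≃ₗᵢ[ℝ] EuclideanSpace ℝ (Fin d))
    (u : Sph d) : Sph d :=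
  ⟨L u, by
    have hu : ‖(u : EuclideanSpace ℝ (Fin d))‖ = 1 :=
      mem_sphere_zero_iff_norm.mp u.2
    simp [mem_sphere_zero_iff_norm, L.norm_map, hu]⟩

/-!
Expanding `⟪u, ξ⟫` and `⟪u, η⟫` in coordinates, bilinearity of the covariance gives
`Cov(⟪u, ξ⟫, ⟪u, η⟫) = ∑ᵢⱼ uᵢ uⱼ Cov(ξᵢ, ηⱼ)`. Invariance of `σ` under the reflection of one
coordinate kills the mixed moments `∫ uᵢ uⱼ dσ`, invariance under transpositions of coordinates
makes the diagonal moments equal, and as they sum to `∫ ‖u‖² dσ = 1` each equals `1 / d`.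
The singleton profiles are odd in `u`, so `Cov_loc` is that integral, and the common factor
`1 / d` cancels in `Corr_loc`.
-/

open ProbabilityTheory

lemma covariance_inner_inner {Ω ι : Type*} [MeasurableSpace Ω] [Fintype ι] {P : Measure Ω}
    [IsFiniteMeasure P] {ξ η : Ω → EuclideanSpace ℝ ι} (hξ : MemLp ξ 2 P) (hη : MemLp η 2 P)
    (u v : EuclideanSpace ℝ ι) :
    cov[fun ω => ⟪u, ξ ω⟫, fun ω => ⟪v, η ω⟫; P]
      = ∑ i, ∑ j, u i * v j * cov[fun ω => ξ ω i, fun ω => η ω j; P] := by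
  simp only [PiLp.inner_apply, RCLike.inner_apply, conj_trivial]
  rw [covariance_fun_sum_fun_sum (fun i => (hξ.eval_piLp i).mul_const (u i))
    (fun j => (hη.eval_piLp j).mul_const (v j))]
  simp only [covariance_mul_const_left, covariance_mul_const_right]
  exact Finset.sum_congr rfl fun i _ => Finset.sum_congr rfl fun j _ => by ring

section Sphere

variable {d : ℕ} {σ : Measure (Sph d)}

lemma continuous_sphereIso (L : EuclideanSpace ℝ (Fin d) ≃ₗᵢ[ℝ] EuclideanSpace ℝ (Fin d)) :
    Continuous (sphereIso L) :=
  (L.continuous.comp continuous_subtype_val).subtype_mk _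

lemma measurableEmbedding_sphereIso
    (L : EuclideanSpace ℝ (Fin d) ≃ₗᵢ[ℝ] EuclideanSpace ℝ (Fin d)) :
    MeasurableEmbedding (sphereIso L) := by
  have hsurj : Function.Surjective (sphereIso L) := fun u =>
    ⟨sphereIso L.symm u, by ext1; simp [sphereIso]⟩
  exact .of_measurable_inverse (continuous_sphereIso L).measurable (hsurj.range_eq ▸ .univ)
    (continuous_sphereIso L.symm).measurable (g := sphereIso L.symm) fun u => by
      ext1; simp [sphereIso]

lemma integral_comp_sphereIso {L : EuclideanSpace ℝ (Fin d) ≃ₗᵢ[ℝ] EuclideanSpace ℝ (Fin d)}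
    (hL : Measure.map (sphereIso L) σ = σ) (f : Sph d → ℝ) :
    ∫ u, f (sphereIso L u) ∂σ = ∫ u, f u ∂σ := by
  conv_rhs => rw [← hL]
  exact ((measurableEmbedding_sphereIso L).integral_map f).symm

lemma integrable_coord_mul_coord [IsFiniteMeasure σ] (i j : Fin d) :
    Integrable (fun u : Sph d => u.1 i * u.1 j) σ :=
  Continuous.integrable_of_hasCompactSupport (by fun_prop) (.of_compactSpace _)

lemma integral_coord_mul_coord_of_ne
    (hσ : ∀ L : EuclideanSpace ℝ (Fin d) ≃ₗᵢ[ℝ] EuclideanSpace ℝ (Fin d),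
      Measure.map (sphereIso L) σ = σ) {i j : Fin d} (hij : i ≠ j) :
    ∫ u : Sph d, u.1 i * u.1 j ∂σ = 0 := by
  let R : EuclideanSpace ℝ (Fin d) ≃ₗᵢ[ℝ] EuclideanSpace ℝ (Fin d) :=
    LinearIsometryEquiv.piLpCongrRight 2
      fun k => if k = i then LinearIsometryEquiv.neg ℝ else LinearIsometryEquiv.refl ℝ ℝ
  have hR (x : EuclideanSpace ℝ (Fin d)) (k : Fin d) : R x k = if k = i then -x k else x k := by
    split_ifs with hk <;> simp [R, hk]
  have h := integral_comp_sphereIso (hσ R) fun u => u.1 i * u.1 j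
  simp only [sphereIso, hR, if_pos, if_neg hij.symm, neg_mul, integral_neg] at h
  linarith

lemma integral_coord_mul_self_eq
    (hσ : ∀ L : EuclideanSpace ℝ (Fin d) ≃ₗᵢ[ℝ] EuclideanSpace ℝ (Fin d),
      Measure.map (sphereIso L) σ = σ) (i j : Fin d) :
    ∫ u : Sph d, u.1 i * u.1 i ∂σ = ∫ u : Sph d, u.1 j * u.1 j ∂σ := by
  have h := integral_comp_sphereIso
    (hσ (LinearIsometryEquiv.piLpCongrLeft 2 ℝ ℝ (Equiv.swap i j))) fun u => u.1 i * u.1 i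
  simpa [sphereIso, LinearIsometryEquiv.piLpCongrLeft_apply, Equiv.piCongrLeft'_apply]
    using h.symm

lemma sum_integral_coord_mul_self [IsProbabilityMeasure σ] :
    ∑ i, ∫ u : Sph d, u.1 i * u.1 i ∂σ = 1 := by
  have hnorm (u : Sph d) : ∑ i, u.1 i * u.1 i = 1 := by
    have h := real_inner_self_eq_norm_sq u.1
    rw [norm_eq_of_mem_sphere u, one_pow] at h
    simpa only [PiLp.inner_apply, RCLike.inner_apply, conj_trivial] using h
  rw [← integral_finsetSum _ fun i _ => integrable_coord_mul_coord i i]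
  simp [hnorm]

lemma integral_coord_mul_coord
    (hσ : ∀ L : EuclideanSpace ℝ (Fin d) ≃ₗᵢ[ℝ] EuclideanSpace ℝ (Fin d),
      Measure.map (sphereIso L) σ = σ) [IsProbabilityMeasure σ] (i j : Fin d) :
    ∫ u : Sph d, u.1 i * u.1 j ∂σ = if i = j then (1 / d : ℝ) else 0 := by
  split_ifs with hij
  · subst hij
    have h := sum_integral_coord_mul_self (σ := σ)
    simp only [integral_coord_mul_self_eq hσ _ i, Finset.sum_const, Finset.card_univ,
      Fintype.card_fin, nsmul_eq_mul] at h
    have hd : (d : ℝ) ≠ 0 := by exact_mod_cast i.pos.ne'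
    rw [eq_div_iff hd, mul_comm, h]
  · exact integral_coord_mul_coord_of_ne hσ hij

end Sphere

lemma oddPart_eq_of_eq_inner {Ω : Type*} {d : ℕ} {h : Ω × Sph d → ℝ}
    {ξ : Ω → EuclideanSpace ℝ (Fin d)} (hh : ∀ ω u, h (ω, u) = ⟪u.1, ξ ω⟫) (p : Ω × Sph d) :
    oddPart h p = ⟪p.2.1, ξ p.1⟫ := by
  simp only [oddPart, hh, coe_neg_sphere, inner_neg_left]
  ring

section Profiles

variable {Ω : Type*} [MeasurableSpace Ω] {P : Measure Ω} [IsFiniteMeasure P] {d : ℕ}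
  {σ : Measure (Sph d)} [IsProbabilityMeasure σ] {ξ η : Ω → EuclideanSpace ℝ (Fin d)}

lemma integral_covariance_inner_inner
    (hσ : ∀ L : EuclideanSpace ℝ (Fin d) ≃ₗᵢ[ℝ] EuclideanSpace ℝ (Fin d),
      Measure.map (sphereIso L) σ = σ) (hξ : MemLp ξ 2 P) (hη : MemLp η 2 P) :
    ∫ u : Sph d, cov[fun ω => ⟪u.1, ξ ω⟫, fun ω => ⟪u.1, η ω⟫; P] ∂σ
      = (1 / d) * ∑ i, cov[fun ω => ξ ω i, fun ω => η ω i; P] := by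
  have hint (i j : Fin d) : Integrable
      (fun u : Sph d => u.1 i * u.1 j * cov[fun ω => ξ ω i, fun ω => η ω j; P]) σ :=
    (integrable_coord_mul_coord i j).mul_const _
  simp_rw [covariance_inner_inner hξ hη]
  rw [integral_finsetSum _ fun i _ => integrable_finsetSum _ fun j _ => hint i j]
  simp_rw [integral_finsetSum _ fun j _ => hint _ j, integral_mul_const,
    integral_coord_mul_coord hσ, ite_mul, zero_mul, Finset.sum_ite_eq, Finset.mem_univ, if_true,
    Finset.mul_sum]

lemma covLoc_eq_of_eq_inner
    (hσ : ∀ L : EuclideanSpace ℝ (Fin d) ≃ₗᵢ[ℝ] EuclideanSpace ℝ (Fin d),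
      Measure.map (sphereIso L) σ = σ) (hξ : MemLp ξ 2 P) (hη : MemLp η 2 P)
    {hX hY : Ω × Sph d → ℝ} (hXdef : ∀ ω u, hX (ω, u) = ⟪u.1, ξ ω⟫)
    (hYdef : ∀ ω u, hY (ω, u) = ⟪u.1, η ω⟫) :
    covLoc P σ hX hY = (1 / d) * ∑ i, cov' P (fun ω => ξ ω i) (fun ω => η ω i) := by
  simp only [covLoc, oddPart_eq_of_eq_inner hXdef, oddPart_eq_of_eq_inner hYdef]
  exact integral_covariance_inner_inner hσ hξ hη

end Profiles

lemma mul_div_sqrt_mul_mul {c : ℝ} (hc : 0 < c) (a x y : ℝ) :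
    c * a / √(c * x * (c * y)) = a / √(x * y) := by
  rw [show c * x * (c * y) = c ^ 2 * (x * y) by ring, Real.sqrt_mul (sq_nonneg c),
    Real.sqrt_sq hc.le, mul_div_mul_left _ _ hc.ne']

theorem singleton_covariance_general {Ω : Type*} [MeasurableSpace Ω] {d : ℕ}
    (P : Measure Ω) [IsProbabilityMeasure P]
    (σ : Measure (Sph d)) [IsProbabilityMeasure σ]
    (hσinv : ∀ L : EuclideanSpace ℝ (Fin d) ≃ₗᵢ[ℝ] EuclideanSpace ℝ (Fin d),
      Measure.map (sphereIso L) σ = σ)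
    (ξ η : Ω → EuclideanSpace ℝ (Fin d)) (hξm : Measurable ξ) (hηm : Measurable η)
    (hξη2 : Integrable (fun ω => ‖ξ ω‖ ^ 2) P ∧ Integrable (fun ω => ‖η ω‖ ^ 2) P)
    (hX hY : Ω × Sph d → ℝ)
    (hXdef : ∀ ω u, hX (ω, u) = ⟪(u : EuclideanSpace ℝ (Fin d)), ξ ω⟫)
    (hYdef : ∀ ω u, hY (ω, u) = ⟪(u : EuclideanSpace ℝ (Fin d)), η ω⟫) :
    (∫ u, cov' P (fun ω => ⟪(u : EuclideanSpace ℝ (Fin d)), ξ ω⟫)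
        (fun ω => ⟪(u : EuclideanSpace ℝ (Fin d)), η ω⟫) ∂σ
      = (1 / d) * ∑ i : Fin d, cov' P (fun ω => ξ ω i) (fun ω => η ω i))
    ∧ covLoc P σ hX hY = (1 / d) * ∑ i : Fin d, cov' P (fun ω => ξ ω i) (fun ω => η ω i)
    ∧ ((0 < ∑ i : Fin d, var' P (fun ω => ξ ω i))
        → (0 < ∑ i : Fin d, var' P (fun ω => η ω i))
        → corrLoc P σ hX hY
          = (∑ i : Fin d, cov' P (fun ω => ξ ω i) (fun ω => η ω i))
            / Real.sqrt ((∑ i : Fin d, var' P (fun ω => ξ ω i))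
                * (∑ i : Fin d, var' P (fun ω => η ω i)))) := by
  have hξ : MemLp ξ 2 P :=
    (memLp_two_iff_integrable_sq_norm hξm.aestronglyMeasurable).2 hξη2.1
  have hη : MemLp η 2 P :=
    (memLp_two_iff_integrable_sq_norm hηm.aestronglyMeasurable).2 hξη2.2
  refine ⟨integral_covariance_inner_inner hσinv hξ hη,
    covLoc_eq_of_eq_inner hσinv hξ hη hXdef hYdef, fun hvarξ _ => ?_⟩
  obtain ⟨i, -, -⟩ := Finset.exists_ne_zero_of_sum_ne_zero hvarξ.ne'
  rw [corrLoc, varLoc, varLoc, covLoc_eq_of_eq_inner hσinv hξ hη hXdef hYdef,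
    covLoc_eq_of_eq_inner hσinv hξ hξ hXdef hXdef,
    covLoc_eq_of_eq_inner hσinv hη hη hYdef hYdef]
  exact mul_div_sqrt_mul_mul (by have := i.pos; positivity) _ _ _

/-- Singleton case, covariance: for random vectors `ξ, η` with finite
second moments, `∫ Cov(⟨u,ξ⟩,⟨u,η⟩) dσ(u) = (1/d)·∑_i Cov(ξ_i,η_i)`; hence for the
singleton support profiles `Cov_loc(X,Y) = (1/d)·∑_i Cov(ξ_i,η_i)` and, when the total
coordinate variances are positive,
`Corr_loc(X,Y) = ∑_i Cov(ξ_i,η_i) / √((∑_i Var ξ_i)·(∑_i Var η_i))`. -/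
theorem singleton_covariance {Ω : Type*} [MeasurableSpace Ω] {d : ℕ} (hd : 0 < d)
    (P : Measure Ω) [IsProbabilityMeasure P]
    (σ : Measure (Sph d)) [IsProbabilityMeasure σ]
    (hσinv : ∀ L : EuclideanSpace ℝ (Fin d) ≃ₗᵢ[ℝ] EuclideanSpace ℝ (Fin d),
      Measure.map (sphereIso L) σ = σ)
    (ξ η : Ω → EuclideanSpace ℝ (Fin d)) (hξm : Measurable ξ) (hηm : Measurable η)
    (hξη2 : Integrable (fun ω => ‖ξ ω‖ ^ 2) P ∧ Integrable (fun ω => ‖η ω‖ ^ 2) P)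
    (hX hY : Ω × Sph d → ℝ)
    (hXdef : ∀ ω u, hX (ω, u) = ⟪(u : EuclideanSpace ℝ (Fin d)), ξ ω⟫)
    (hYdef : ∀ ω u, hY (ω, u) = ⟪(u : EuclideanSpace ℝ (Fin d)), η ω⟫) :
    (∫ u, cov' P (fun ω => ⟪(u : EuclideanSpace ℝ (Fin d)), ξ ω⟫)
        (fun ω => ⟪(u : EuclideanSpace ℝ (Fin d)), η ω⟫) ∂σ
      = (1 / d) * ∑ i : Fin d, cov' P (fun ω => ξ ω i) (fun ω => η ω i))
    ∧ covLoc P σ hX hY = (1 / d) * ∑ i : Fin d, cov' P (fun ω => ξ ω i) (fun ω => η ω i)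
    ∧ ((0 < ∑ i : Fin d, var' P (fun ω => ξ ω i))
        → (0 < ∑ i : Fin d, var' P (fun ω => η ω i))
        → corrLoc P σ hX hY
          = (∑ i : Fin d, cov' P (fun ω => ξ ω i) (fun ω => η ω i))
            / Real.sqrt ((∑ i : Fin d, var' P (fun ω => ξ ω i))
                * (∑ i : Fin d, var' P (fun ω => η ω i)))) :=
  singleton_covariance_general P σ hσinv ξ η hξm hηm hξη2 hX hY hXdef hYdef

end
end

section
/- Strong law of large numbers in the L²(σ) support norm: suppose (Z_i) is weakly stationary, and that there are nonnegative numbers (ρ_k)_{k≥1} with ∑_{k=1}^∞ ρ_k < ∞ such that for all k ≥ 1 and all u ∈ S^{d-1}, |Cov(Z_0(·,u), Z_k(·,u))| ≤ ρ_k·√(Var(Z_0(·,u))·Var(Z_k(·,u))). Then ‖S_n(ω,·)‖_{2,σ} → 0 as n → ∞ for ℙ-almost every ω. -/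
/-!
Rajchman's subsequence argument, run on the energies `F a b ω = ‖∑_{a<i≤b} Z_i(ω,·)‖²_{L²(σ)}`.
By weak stationarity the lag-`k` correlation of `Z_i(·,u)` is at most `ρ_k` uniformly in `i`, so
expanding the square gives `𝔼 (∑_{a<i≤b} Z_i(·,u))² ≤ (b - a) (1 + 2∑ρ) Var Z_0(·,u)`, and
integrating over `σ` yields `𝔼 F a b ≤ (b - a) C`. For `n² ≤ m < (n + 1)²` one has
`F 0 m ≤ 2 F 0 n² + 2 F n² m`, and the sum `D_n` of these `2n + 2` block energies has
`𝔼 D_n = O(n²)`. Hence `∑ 𝔼 D_n / n⁴ < ∞`, so `D_n / n⁴ → 0` almost surely, and this bounds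
`F 0 m / m² = ‖S_m‖²`.
-/

open MeasureTheory Filter
open scoped RealInnerProductSpace

noncomputable section

/-- The `L²(σ)` norm of a function on the sphere. -/
def l2norm {d : ℕ} (σ : Measure (Sph d)) (f : Sph d → ℝ) : ℝ :=
  Real.sqrt (∫ u, f u ^ 2 ∂σ)

/-- The normalized partial sum `S_n(ω,u) = (1/n) ∑_{i=1}^n Z_i(ω,u)`. -/
def partialAvg {Ω : Type*} {d : ℕ} (Z : ℕ → Ω × Sph d → ℝ) (n : ℕ)
    (ω : Ω) (u : Sph d) : ℝ :=
  (1 / (n : ℝ)) * ∑ i ∈ Finset.Icc 1 n, Z i (ω, u)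

/-- A centered square-integrable jointly measurable field on `Ω × S^{d-1}`. -/
def IsCenteredField {Ω : Type*} [MeasurableSpace Ω] {d : ℕ} (P : Measure Ω)
    (σ : Measure (Sph d)) (Z : Ω × Sph d → ℝ) : Prop :=
  Measurable Z ∧ Integrable (fun p => (Z p) ^ 2) (P.prod σ)
    ∧ ∀ u, ∫ ω, Z (ω, u) ∂P = 0

/-- Weak stationarity: lagged direction-wise covariances depend only on the lag. -/
def WeaklyStationary {Ω : Type*} [MeasurableSpace Ω] {d : ℕ} (P : Measure Ω)
    (Z : ℕ → Ω × Sph d → ℝ) : Prop :=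
  ∀ i k : ℕ, ∀ u : Sph d,
    cov' P (fun ω => Z i (ω, u)) (fun ω => Z (i + k) (ω, u))
      = cov' P (fun ω => Z 0 (ω, u)) (fun ω => Z k (ω, u))

open scoped ENNReal Topology

section SecondMoment
variable {Ω : Type*} [MeasurableSpace Ω] {P : Measure Ω}

theorem sum_comp_sub_le_tsum {κ : ℤ → ℝ} (hκ0 : ∀ z, 0 ≤ κ z) (hκ : Summable κ)
    (A : Finset ℕ) (i : ℕ) : ∑ j ∈ A, κ ((j : ℤ) - i) ≤ ∑' z, κ z := by
  have hinj : Function.Injective fun j : ℕ => (j : ℤ) - i := fun j k h => by simpa using h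
  calc ∑ j ∈ A, κ ((j : ℤ) - i) ≤ ∑' j : ℕ, κ ((j : ℤ) - i) :=
        (hκ.comp_injective hinj).sum_le_tsum A fun _ _ => hκ0 _
    _ ≤ ∑' z, κ z := tsum_comp_le_tsum_of_inj hκ hκ0 hinj

theorem integral_sq_finsetSum_le {X : ℕ → Ω → ℝ} (hX : ∀ i, MemLp (X i) 2 P)
    {κ : ℤ → ℝ} (hκ0 : ∀ z, 0 ≤ κ z) (hκ : Summable κ) {v : ℝ} (hv : 0 ≤ v)
    (hcorr : ∀ i j, ∫ ω, X i ω * X j ω ∂P ≤ κ ((j : ℤ) - i) * v) (A : Finset ℕ) :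
    ∫ ω, (∑ i ∈ A, X i ω) ^ 2 ∂P ≤ A.card * ((∑' z, κ z) * v) := by
  have hmul : ∀ i j, Integrable (fun ω => X i ω * X j ω) P := fun i j =>
    (hX i).integrable_mul (hX j)
  calc ∫ ω, (∑ i ∈ A, X i ω) ^ 2 ∂P = ∑ i ∈ A, ∑ j ∈ A, ∫ ω, X i ω * X j ω ∂P := by
        simp_rw [sq, Finset.sum_mul_sum]
        rw [integral_finsetSum _ fun i _ => integrable_finsetSum _ fun j _ => hmul i j]
        exact Finset.sum_congr rfl fun i _ => integral_finsetSum _ fun j _ => hmul i j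
    _ ≤ ∑ i ∈ A, (∑ j ∈ A, κ ((j : ℤ) - i)) * v := by
        gcongr with i _
        rw [Finset.sum_mul]
        exact Finset.sum_le_sum fun j _ => hcorr i j
    _ ≤ ∑ _i ∈ A, (∑' z, κ z) * v := by
        gcongr with i _
        exact sum_comp_sub_le_tsum hκ0 hκ A i
    _ = A.card * ((∑' z, κ z) * v) := by rw [Finset.sum_const, nsmul_eq_mul]

end SecondMoment

section Rajchman
variable {Ω : Type*}

def squareBlockMajorant (F : ℕ → ℕ → Ω → ℝ≥0∞) (n : ℕ) (ω : Ω) : ℝ≥0∞ :=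
  F 0 (n ^ 2) ω + ∑ m ∈ Finset.Ico (n ^ 2) ((n + 1) ^ 2), F (n ^ 2) m ω

variable {F : ℕ → ℕ → Ω → ℝ≥0∞}

theorem le_squareBlockMajorant (hsplit : ∀ b c ω, b ≤ c → F 0 c ω ≤ 2 * F 0 b ω + 2 * F b c ω)
    {n m : ℕ} (hnm : n ^ 2 ≤ m) (hmn : m < (n + 1) ^ 2) (ω : Ω) :
    F 0 m ω ≤ 2 * squareBlockMajorant F n ω :=
  calc F 0 m ω ≤ 2 * F 0 (n ^ 2) ω + 2 * F (n ^ 2) m ω := hsplit _ _ _ hnm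
    _ ≤ 2 * F 0 (n ^ 2) ω + 2 * ∑ m ∈ Finset.Ico (n ^ 2) ((n + 1) ^ 2), F (n ^ 2) m ω := by
      gcongr
      exact Finset.single_le_sum (f := fun m => F (n ^ 2) m ω) (fun _ _ => zero_le)
        (Finset.mem_Ico.2 ⟨hnm, hmn⟩)
    _ = 2 * squareBlockMajorant F n ω := (mul_add _ _ _).symm

section Integral
variable [MeasurableSpace Ω] {P : Measure Ω}

theorem ae_tendsto_zero_of_tsum_lintegral_ne_top {g : ℕ → Ω → ℝ≥0∞}
    (hg : ∀ n, AEMeasurable (g n) P) (hsum : ∑' n, ∫⁻ ω, g n ω ∂P ≠ ∞) :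
    ∀ᵐ ω ∂P, Tendsto (fun n => g n ω) atTop (𝓝 0) := by
  rw [← lintegral_tsum hg] at hsum
  filter_upwards [ae_lt_top' (AEMeasurable.tsum hg) hsum] with ω hω
  exact ENNReal.tendsto_atTop_zero_of_tsum_ne_top hω.ne

theorem tsum_inv_succ_sq_ne_top : ∑' n : ℕ, (((n + 1 : ℕ) : ℝ≥0∞) ^ 2)⁻¹ ≠ ∞ := by
  have hsum : Summable fun n : ℕ => 1 / ((n + 1 : ℕ) : ℝ) ^ 2 :=
    (summable_nat_add_iff 1).2 (Real.summable_one_div_nat_pow.2 one_lt_two)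
  have hterm : ∀ n : ℕ,
      (((n + 1 : ℕ) : ℝ≥0∞) ^ 2)⁻¹ = ENNReal.ofReal (1 / ((n + 1 : ℕ) : ℝ) ^ 2) := by
    intro n
    rw [one_div, ENNReal.ofReal_inv_of_pos (by positivity), ENNReal.ofReal_pow (by positivity),
      ENNReal.ofReal_natCast]
  simp_rw [hterm, ← ENNReal.ofReal_tsum_of_nonneg (fun n => by positivity) hsum]
  exact ENNReal.ofReal_ne_top

theorem lintegral_squareBlockMajorant_le (hF : ∀ a b, Measurable (F a b)) {C : ℝ≥0∞}
    (hint : ∀ a b, ∫⁻ ω, F a b ω ∂P ≤ (b - a : ℕ) * C) (n : ℕ) :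
    ∫⁻ ω, squareBlockMajorant F n ω ∂P ≤ 7 * (n : ℝ≥0∞) ^ 2 * C := by
  have hlag : ∀ m ∈ Finset.Ico (n ^ 2) ((n + 1) ^ 2), m - n ^ 2 ≤ 2 * n := by
    intro m hm
    have := (Finset.mem_Ico.1 hm).2
    rw [add_sq] at this
    omega
  have hcard : (Finset.Ico (n ^ 2) ((n + 1) ^ 2)).card = 2 * n + 1 := by
    rw [Nat.card_Ico, add_sq]; omega
  calc ∫⁻ ω, squareBlockMajorant F n ω ∂P
      = ∫⁻ ω, F 0 (n ^ 2) ω ∂P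
          + ∑ m ∈ Finset.Ico (n ^ 2) ((n + 1) ^ 2), ∫⁻ ω, F (n ^ 2) m ω ∂P := by
        simp only [squareBlockMajorant]
        rw [lintegral_add_left (hF _ _), lintegral_finsetSum _ fun m _ => hF _ _]
    _ ≤ (n ^ 2 : ℕ) * C + ∑ m ∈ Finset.Ico (n ^ 2) ((n + 1) ^ 2), ((2 * n : ℕ) : ℝ≥0∞) * C := by
        gcongr with m hm
        · simpa only [Nat.sub_zero] using hint 0 (n ^ 2)
        · exact (hint _ _).trans (by gcongr; exact hlag m hm)
    _ = (n ^ 2 + (2 * n + 1) * (2 * n) : ℕ) * C := by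
        rw [Finset.sum_const, hcard, nsmul_eq_mul]; push_cast; ring
    _ ≤ 7 * (n : ℝ≥0∞) ^ 2 * C := by
        gcongr
        exact_mod_cast (by nlinarith : n ^ 2 + (2 * n + 1) * (2 * n) ≤ 7 * n ^ 2)

theorem ae_tendsto_squareBlockMajorant_div (hF : ∀ a b, Measurable (F a b)) {C : ℝ≥0∞} (hC : C ≠ ∞)
    (hint : ∀ a b, ∫⁻ ω, F a b ω ∂P ≤ (b - a : ℕ) * C) :
    ∀ᵐ ω ∂P, Tendsto (fun n : ℕ => squareBlockMajorant F n ω / (n : ℝ≥0∞) ^ 4) atTop (𝓝 0) := by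
  have hmeas : ∀ n, Measurable (squareBlockMajorant F n) := fun n =>
    (hF _ _).add (Finset.measurable_sum _ fun m _ => hF _ _)
  have hterm : ∀ n : ℕ, ∫⁻ ω, squareBlockMajorant F (n + 1) ω / ((n + 1 : ℕ) : ℝ≥0∞) ^ 4 ∂P
      ≤ 7 * C * (((n + 1 : ℕ) : ℝ≥0∞) ^ 2)⁻¹ := by
    intro n
    set k : ℝ≥0∞ := ((n + 1 : ℕ) : ℝ≥0∞) with hk_def
    have hk : k ^ 2 ≠ 0 := pow_ne_zero _ (by simp [hk_def])
    have hk' : k ^ 2 ≠ ∞ := by finiteness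
    simp_rw [div_eq_mul_inv]
    rw [lintegral_mul_const _ (hmeas _)]
    calc (∫⁻ ω, squareBlockMajorant F (n + 1) ω ∂P) * (k ^ 4)⁻¹
        ≤ 7 * k ^ 2 * C * (k ^ 4)⁻¹ := by
          gcongr
          exact lintegral_squareBlockMajorant_le hF hint _
      _ = 7 * C * (k ^ 2)⁻¹ * (k ^ 2 * (k ^ 2)⁻¹) := by
          rw [show k ^ 4 = k ^ 2 * k ^ 2 by ring, ENNReal.mul_inv (.inl hk) (.inl hk')]
          ring
      _ = 7 * C * (k ^ 2)⁻¹ := by rw [ENNReal.mul_inv_cancel hk hk', mul_one]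
  have hsum : ∑' n, ∫⁻ ω, squareBlockMajorant F (n + 1) ω / ((n + 1 : ℕ) : ℝ≥0∞) ^ 4 ∂P ≠ ∞ :=
    ne_top_of_le_ne_top (by rw [ENNReal.tsum_mul_left]; finiteness [tsum_inv_succ_sq_ne_top])
      (ENNReal.tsum_le_tsum hterm)
  filter_upwards [ae_tendsto_zero_of_tsum_lintegral_ne_top
    (fun n => ((hmeas _).div_const _).aemeasurable) hsum] with ω hω
  exact (tendsto_add_atTop_iff_nat 1).1 hω

theorem ae_tendsto_div_sq_of_lintegral_le (hF : ∀ a b, Measurable (F a b))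
    (hsplit : ∀ b c ω, b ≤ c → F 0 c ω ≤ 2 * F 0 b ω + 2 * F b c ω)
    {C : ℝ≥0∞} (hC : C ≠ ∞) (hint : ∀ a b, ∫⁻ ω, F a b ω ∂P ≤ (b - a : ℕ) * C) :
    ∀ᵐ ω ∂P, Tendsto (fun m : ℕ => F 0 m ω / (m : ℝ≥0∞) ^ 2) atTop (𝓝 0) := by
  have hsqrt : Tendsto Nat.sqrt atTop atTop :=
    tendsto_atTop_atTop.2 fun b => ⟨b ^ 2, fun m hm => Nat.le_sqrt'.2 hm⟩
  filter_upwards [ae_tendsto_squareBlockMajorant_div hF hC hint] with ω hω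
  have hlim := ENNReal.Tendsto.const_mul (a := 2) (hω.comp hsqrt) (.inr ENNReal.ofNat_ne_top)
  rw [mul_zero] at hlim
  refine tendsto_of_tendsto_of_tendsto_of_le_of_le tendsto_const_nhds hlim (fun _ => zero_le)
    fun m => ?_
  have h4 : ((Nat.sqrt m : ℕ) : ℝ≥0∞) ^ 4 ≤ (m : ℝ≥0∞) ^ 2 := by
    have := Nat.pow_le_pow_left (Nat.sqrt_le' m) 2
    rw [← pow_mul] at this
    exact_mod_cast this
  calc F 0 m ω / (m : ℝ≥0∞) ^ 2
      ≤ 2 * squareBlockMajorant F (Nat.sqrt m) ω / ((Nat.sqrt m : ℕ) : ℝ≥0∞) ^ 4 :=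
        ENNReal.div_le_div
          (le_squareBlockMajorant hsplit (Nat.sqrt_le' m) (Nat.lt_succ_sqrt' m) ω) h4
    _ = _ := mul_div_assoc _ _ _

end Integral

end Rajchman

section Covariance
variable {Ω : Type*} [MeasurableSpace Ω] {P : Measure Ω}

theorem cov'_comm (X Y : Ω → ℝ) : cov' P X Y = cov' P Y X := by
  simp only [cov', mul_comm]

theorem var'_nonneg (X : Ω → ℝ) : 0 ≤ var' P X :=
  integral_nonneg fun _ => mul_self_nonneg _

theorem cov'_eq_integral_mul {X Y : Ω → ℝ} (hX : ∫ ω, X ω ∂P = 0) (hY : ∫ ω, Y ω ∂P = 0) :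
    cov' P X Y = ∫ ω, X ω * Y ω ∂P := by
  simp [cov', hX, hY]

def lagWeight (ρ : ℕ → ℝ) (z : ℤ) : ℝ := if z = 0 then 1 else ρ z.natAbs

variable {ρ : ℕ → ℝ}

theorem lagWeight_neg (z : ℤ) : lagWeight ρ (-z) = lagWeight ρ z := by
  simp [lagWeight]

theorem lagWeight_natCast {k : ℕ} (hk : k ≠ 0) : lagWeight ρ k = ρ k := by
  simp [lagWeight, hk]

theorem lagWeight_nonneg (hρ0 : ∀ k, 1 ≤ k → 0 ≤ ρ k) (z : ℤ) : 0 ≤ lagWeight ρ z := by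
  unfold lagWeight
  split_ifs with hz
  · exact zero_le_one
  · exact hρ0 _ (Int.natAbs_pos.2 hz)

theorem summable_lagWeight (hρsum : Summable fun k => ρ (k + 1)) : Summable (lagWeight ρ) := by
  have hnat : Summable fun n : ℕ => lagWeight ρ n :=
    (summable_nat_add_iff 1).1 (hρsum.congr fun k => (lagWeight_natCast k.succ_ne_zero).symm)
  exact .of_nat_of_neg hnat (by simpa only [lagWeight_neg] using hnat)

variable {d : ℕ} {Z : ℕ → Ω × Sph d → ℝ}

theorem cov'_le_lagWeight_mul_var' (hstat : WeaklyStationary P Z)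
    (hmix : ∀ k, 1 ≤ k → ∀ u : Sph d,
      |cov' P (fun ω => Z 0 (ω, u)) (fun ω => Z k (ω, u))|
        ≤ ρ k * Real.sqrt (var' P (fun ω => Z 0 (ω, u)) * var' P (fun ω => Z k (ω, u))))
    (i j : ℕ) (u : Sph d) :
    cov' P (fun ω => Z i (ω, u)) (fun ω => Z j (ω, u))
      ≤ lagWeight ρ ((j : ℤ) - i) * var' P (fun ω => Z 0 (ω, u)) := by
  wlog hij : i ≤ j generalizing i j
  · rw [cov'_comm, ← neg_sub, lagWeight_neg]
    exact this j i (by omega)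
  obtain ⟨k, rfl⟩ := Nat.exists_eq_add_of_le hij
  rw [hstat i k u, show ((i + k : ℕ) : ℤ) - i = k by push_cast; ring]
  rcases Nat.eq_zero_or_pos k with rfl | hk
  · simp [lagWeight, var']
  have hvar : var' P (fun ω => Z k (ω, u)) = var' P (fun ω => Z 0 (ω, u)) := hstat k 0 u
  calc cov' P (fun ω => Z 0 (ω, u)) (fun ω => Z k (ω, u))
      ≤ ρ k * Real.sqrt (var' P (fun ω => Z 0 (ω, u)) * var' P (fun ω => Z k (ω, u))) :=
        (le_abs_self _).trans (hmix k hk u)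
    _ = lagWeight ρ k * var' P (fun ω => Z 0 (ω, u)) := by
        rw [hvar, Real.sqrt_mul_self (var'_nonneg _), lagWeight_natCast hk.ne']

end Covariance

section BlockSums
variable {Ω S : Type*} [MeasurableSpace Ω] [MeasurableSpace S]

def blockSumSqNorm (σ : Measure S) (Z : ℕ → Ω × S → ℝ) (a b : ℕ) (ω : Ω) : ℝ≥0∞ :=
  ∫⁻ u, ENNReal.ofReal ((∑ i ∈ Finset.Ioc a b, Z i (ω, u)) ^ 2) ∂σ

variable {σ : Measure S} {Z : ℕ → Ω × S → ℝ}

theorem measurable_ofReal_sq_blockSum (hZ : ∀ i, Measurable (Z i)) (a b : ℕ) :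
    Measurable fun p : Ω × S => ENNReal.ofReal ((∑ i ∈ Finset.Ioc a b, Z i p) ^ 2) :=
  ENNReal.measurable_ofReal.comp ((Finset.measurable_sum _ fun i _ => hZ i).pow_const 2)

theorem measurable_blockSumSqNorm [SFinite σ] (hZ : ∀ i, Measurable (Z i)) (a b : ℕ) :
    Measurable (blockSumSqNorm σ Z a b) :=
  (measurable_ofReal_sq_blockSum hZ a b).lintegral_prod_right'

theorem blockSumSqNorm_le_add (hZ : ∀ i, Measurable (Z i)) {a b c : ℕ} (hab : a ≤ b)
    (hbc : b ≤ c) (ω : Ω) :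
    blockSumSqNorm σ Z a c ω ≤ 2 * blockSumSqNorm σ Z a b ω + 2 * blockSumSqNorm σ Z b c ω := by
  have hpt : ∀ u, ENNReal.ofReal ((∑ i ∈ Finset.Ioc a c, Z i (ω, u)) ^ 2)
      ≤ 2 * ENNReal.ofReal ((∑ i ∈ Finset.Ioc a b, Z i (ω, u)) ^ 2)
        + 2 * ENNReal.ofReal ((∑ i ∈ Finset.Ioc b c, Z i (ω, u)) ^ 2) := by
    intro u
    rw [← Finset.sum_Ioc_consecutive _ hab hbc, ← ENNReal.ofReal_ofNat 2,
      ← ENNReal.ofReal_mul zero_le_two, ← ENNReal.ofReal_mul zero_le_two,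
      ← ENNReal.ofReal_add (by positivity) (by positivity), ← mul_add]
    exact ENNReal.ofReal_le_ofReal add_sq_le
  have hmeas : Measurable fun u => ENNReal.ofReal ((∑ i ∈ Finset.Ioc a b, Z i (ω, u)) ^ 2) :=
    (measurable_ofReal_sq_blockSum hZ a b).comp measurable_prodMk_left
  calc blockSumSqNorm σ Z a c ω
      ≤ ∫⁻ u, 2 * ENNReal.ofReal ((∑ i ∈ Finset.Ioc a b, Z i (ω, u)) ^ 2)
        + 2 * ENNReal.ofReal ((∑ i ∈ Finset.Ioc b c, Z i (ω, u)) ^ 2) ∂σ := lintegral_mono hpt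
    _ = _ := by
      rw [lintegral_add_left (hmeas.const_mul 2), lintegral_const_mul' _ _ ENNReal.ofNat_ne_top,
        lintegral_const_mul' _ _ ENNReal.ofNat_ne_top]
      rfl

end BlockSums

section SupportNorm
variable {Ω : Type*} [MeasurableSpace Ω] {P : Measure Ω} {d : ℕ} {σ : Measure (Sph d)}
  {Z : ℕ → Ω × Sph d → ℝ}

theorem lintegral_var'_ne_top [SFinite P] [SFinite σ] {Y : Ω × Sph d → ℝ}
    (hY : IsCenteredField P σ Y) :
    ∫⁻ u, ENNReal.ofReal (var' P fun ω => Y (ω, u)) ∂σ ≠ ∞ := by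
  have hmeas : Measurable fun p : Ω × Sph d => ENNReal.ofReal (Y p ^ 2) :=
    ENNReal.measurable_ofReal.comp (hY.1.pow_const 2)
  refine ne_top_of_le_ne_top hY.2.1.lintegral_lt_top.ne ?_
  rw [lintegral_prod_symm _ hmeas.aemeasurable]
  refine lintegral_mono_ae ?_
  filter_upwards [hY.2.1.swap.prod_right_ae] with u hu
  have hu : Integrable (fun ω => Y (ω, u) ^ 2) P := hu
  simp only [var', cov'_eq_integral_mul (hY.2.2 u) (hY.2.2 u), ← sq]
  exact (ofReal_integral_eq_lintegral_ofReal hu (ae_of_all _ fun _ => sq_nonneg _)).le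

theorem lintegral_sq_finsetSum_le (hZ : ∀ i, IsCenteredField P σ (Z i))
    {κ : ℤ → ℝ} (hκ0 : ∀ z, 0 ≤ κ z) (hκ : Summable κ)
    (hcov : ∀ i j u, cov' P (fun ω => Z i (ω, u)) (fun ω => Z j (ω, u))
      ≤ κ ((j : ℤ) - i) * var' P (fun ω => Z 0 (ω, u)))
    {u : Sph d} (hu : ∀ i, Integrable (fun ω => Z i (ω, u) ^ 2) P) (A : Finset ℕ) :
    ∫⁻ ω, ENNReal.ofReal ((∑ i ∈ A, Z i (ω, u)) ^ 2) ∂P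
      ≤ ENNReal.ofReal (A.card * ((∑' z, κ z) * var' P fun ω => Z 0 (ω, u))) := by
  have hX : ∀ i, MemLp (fun ω => Z i (ω, u)) 2 P := fun i =>
    (memLp_two_iff_integrable_sq ((hZ i).1.comp measurable_prodMk_right).aestronglyMeasurable).2
      (hu i)
  rw [← ofReal_integral_eq_lintegral_ofReal (memLp_finsetSum A fun i _ => hX i).integrable_sq
    (ae_of_all _ fun _ => sq_nonneg _)]
  refine ENNReal.ofReal_le_ofReal
    (integral_sq_finsetSum_le hX hκ0 hκ (var'_nonneg _) (fun i j => ?_) A)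
  rw [← cov'_eq_integral_mul ((hZ i).2.2 u) ((hZ j).2.2 u)]
  exact hcov i j u

theorem lintegral_blockSumSqNorm_le [SFinite P] [SFinite σ]
    (hZ : ∀ i, IsCenteredField P σ (Z i)) {κ : ℤ → ℝ} (hκ0 : ∀ z, 0 ≤ κ z) (hκ : Summable κ)
    (hcov : ∀ i j u, cov' P (fun ω => Z i (ω, u)) (fun ω => Z j (ω, u))
      ≤ κ ((j : ℤ) - i) * var' P (fun ω => Z 0 (ω, u)))
    (a b : ℕ) :
    ∫⁻ ω, blockSumSqNorm σ Z a b ω ∂P ≤ (b - a : ℕ) * (ENNReal.ofReal (∑' z, κ z)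
      * ∫⁻ u, ENNReal.ofReal (var' P fun ω => Z 0 (ω, u)) ∂σ) := by
  have hgood : ∀ᵐ u ∂σ, ∀ i, Integrable (fun ω => Z i (ω, u) ^ 2) P :=
    ae_all_iff.2 fun i => (hZ i).2.1.swap.prod_right_ae
  have hK : 0 ≤ ∑' z, κ z := tsum_nonneg hκ0
  calc ∫⁻ ω, blockSumSqNorm σ Z a b ω ∂P
      = ∫⁻ u, ∫⁻ ω, ENNReal.ofReal ((∑ i ∈ Finset.Ioc a b, Z i (ω, u)) ^ 2) ∂P ∂σ :=
        lintegral_lintegral_swap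
          (measurable_ofReal_sq_blockSum (fun i => (hZ i).1) a b).aemeasurable
    _ ≤ ∫⁻ u, ENNReal.ofReal ((Finset.Ioc a b).card
          * ((∑' z, κ z) * var' P fun ω => Z 0 (ω, u))) ∂σ := by
        refine lintegral_mono_ae ?_
        filter_upwards [hgood] with u hu
        exact lintegral_sq_finsetSum_le hZ hκ0 hκ hcov hu _
    _ = _ := by
        simp_rw [Nat.card_Ioc, ENNReal.ofReal_mul (Nat.cast_nonneg _), ENNReal.ofReal_mul hK,
          ENNReal.ofReal_natCast]
        rw [lintegral_const_mul' _ _ (by finiteness), lintegral_const_mul' _ _ (by finiteness)]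

theorem l2norm_partialAvg_eq (hZ : ∀ i, Measurable (Z i)) (n : ℕ) (ω : Ω) :
    l2norm σ (fun u => partialAvg Z n ω u)
      = Real.sqrt ((blockSumSqNorm σ Z 0 n ω / (n : ℝ≥0∞) ^ 2).toReal) := by
  rcases Nat.eq_zero_or_pos n with rfl | hn
  · simp [l2norm, partialAvg, blockSumSqNorm]
  have hpt : ∀ u, ENNReal.ofReal (partialAvg Z n ω u ^ 2)
      = ENNReal.ofReal ((∑ i ∈ Finset.Ioc 0 n, Z i (ω, u)) ^ 2) * ((n : ℝ≥0∞) ^ 2)⁻¹ := by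
    intro u
    rw [partialAvg, ← Finset.Icc_add_one_left_eq_Ioc, zero_add, mul_pow, mul_comm,
      ENNReal.ofReal_mul (sq_nonneg _), one_div, inv_pow,
      ENNReal.ofReal_inv_of_pos (by positivity), ENNReal.ofReal_pow (Nat.cast_nonneg _),
      ENNReal.ofReal_natCast]
  have hmeas : Measurable fun u => partialAvg Z n ω u :=
    ((Finset.measurable_sum _ fun i _ => hZ i).comp measurable_prodMk_left).const_mul _
  rw [l2norm, integral_eq_lintegral_of_nonneg_ae (ae_of_all _ fun _ => sq_nonneg _)
    (hmeas.pow_const 2).aestronglyMeasurable, div_eq_mul_inv, blockSumSqNorm]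
  simp_rw [hpt]
  rw [lintegral_mul_const' _ _ (by simp [hn.ne'])]

end SupportNorm

theorem slln_support_norm_general {Ω : Type*} [MeasurableSpace Ω] {d : ℕ}
    (P : Measure Ω) [IsProbabilityMeasure P]
    (σ : Measure (Sph d)) [IsProbabilityMeasure σ]
    (Z : ℕ → Ω × Sph d → ℝ) (hZ : ∀ i, IsCenteredField P σ (Z i))
    (hstat : WeaklyStationary P Z)
    (ρ : ℕ → ℝ) (hρ0 : ∀ k, 1 ≤ k → 0 ≤ ρ k)
    (hρsum : Summable (fun k : ℕ => ρ (k + 1)))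
    (hmix : ∀ k, 1 ≤ k → ∀ u : Sph d,
      |cov' P (fun ω => Z 0 (ω, u)) (fun ω => Z k (ω, u))|
        ≤ ρ k * Real.sqrt (var' P (fun ω => Z 0 (ω, u)) * var' P (fun ω => Z k (ω, u)))) :
    ∀ᵐ ω ∂P, Tendsto (fun n : ℕ => l2norm σ (fun u => partialAvg Z n ω u))
      atTop (nhds 0) := by
  have hZm : ∀ i, Measurable (Z i) := fun i => (hZ i).1
  have hC : ENNReal.ofReal (∑' z, lagWeight ρ z)
      * ∫⁻ u, ENNReal.ofReal (var' P fun ω => Z 0 (ω, u)) ∂σ ≠ ∞ :=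
    ENNReal.mul_ne_top ENNReal.ofReal_ne_top (lintegral_var'_ne_top (hZ 0))
  filter_upwards [ae_tendsto_div_sq_of_lintegral_le (measurable_blockSumSqNorm hZm)
    (fun b c ω hbc => blockSumSqNorm_le_add hZm b.zero_le hbc ω) hC
    (lintegral_blockSumSqNorm_le hZ (lagWeight_nonneg hρ0) (summable_lagWeight hρsum)
      (cov'_le_lagWeight_mul_var' hstat hmix))] with ω hω
  simp_rw [l2norm_partialAvg_eq hZm]
  simpa only [Function.comp_def, ENNReal.toReal_zero, Real.sqrt_zero] using
    (Real.continuous_sqrt.tendsto 0).comp ((ENNReal.tendsto_toReal ENNReal.zero_ne_top).comp hω)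

/-- SLLN in the `L²(σ)` support norm: under weak stationarity and
summable mixing bounds, `‖S_n(ω,·)‖_{2,σ} → 0` for `ℙ`-almost every `ω`. -/
theorem slln_support_norm {Ω : Type*} [MeasurableSpace Ω] {d : ℕ} (hd : 0 < d)
    (P : Measure Ω) [IsProbabilityMeasure P]
    (σ : Measure (Sph d)) [IsProbabilityMeasure σ]
    (Z : ℕ → Ω × Sph d → ℝ) (hZ : ∀ i, IsCenteredField P σ (Z i))
    (hstat : WeaklyStationary P Z)
    (ρ : ℕ → ℝ) (hρ0 : ∀ k, 1 ≤ k → 0 ≤ ρ k)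
    (hρsum : Summable (fun k : ℕ => ρ (k + 1)))
    (hmix : ∀ k, 1 ≤ k → ∀ u : Sph d,
      |cov' P (fun ω => Z 0 (ω, u)) (fun ω => Z k (ω, u))|
        ≤ ρ k * Real.sqrt (var' P (fun ω => Z 0 (ω, u)) * var' P (fun ω => Z k (ω, u)))) :
    ∀ᵐ ω ∂P, Tendsto (fun n : ℕ => l2norm σ (fun u => partialAvg Z n ω u))
      atTop (nhds 0) :=
  slln_support_norm_general P σ Z hZ hstat ρ hρ0 hρsum hmix

end
end

section
/- Dyadic maximal inequality for Hilbert-valued partial sums: let (Z_i)_{i≥1} be Bochner-integrable random elements of H with 𝔼[Z_i] = 0 and 𝔼‖Z_i‖² < ∞, and suppose there is a constant K < ∞ such that 𝔼‖∑_{i=m+1}^{m+ℓ} Z_i‖² ≤ K·ℓ for all integers m ≥ 0 and ℓ ≥ 1. Then for every integer r ≥ 1, every m ≥ 0 and every ε > 0, writing U_ℓ := ∑_{i=m+1}^{m+ℓ} Z_i, one has ℙ( max_{1≤ℓ≤2^r} ‖U_ℓ‖ > ε·2^r ) ≤ 4K(r+1)³/(ε²·2^r). -/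
/-!
Binary expansion: for `ℓ ≤ 2^r` the interval `(0, ℓ]` is a disjoint union of dyadic blocks
`(k 2^j, (k+1) 2^j]`, at most one of each scale `j ≤ r`. So if every dyadic block sum has norm at
most `c = ε 2^r / (r+1)`, every partial sum has norm at most `ε 2^r`. By Chebyshev's inequality
each of the `2^(r-j)` blocks of scale `j` exceeds `c` with probability at most `K 2^j / c²`, and a
union bound over blocks and scales gives `(r+1) K 2^r / c² = K (r+1)³ / (ε² 2^r)`.
-/

open MeasureTheory Finset

def dyadicBlock {M : Type*} [AddCommMonoid M] (v : ℕ → M) (j k : ℕ) : M :=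
  ∑ i ∈ Ioc (k * 2 ^ j) ((k + 1) * 2 ^ j), v i

theorem Finset.sum_Ioc_comp_add_left {M : Type*} [AddCommMonoid M] (f : ℕ → M) (m a b : ℕ) :
    ∑ i ∈ Ioc a b, f (m + i) = ∑ i ∈ Ioc (m + a) (m + b), f i := by
  rw [← map_add_left_Ioc, sum_map]
  rfl

section Dyadic

variable {E : Type*} [SeminormedAddCommGroup E]

theorem norm_sum_Ioc_le_of_norm_dyadicBlock_le_of_dvd {v : ℕ → E} {r : ℕ} {c : ℝ}
    (h : ∀ j ≤ r, ∀ k < 2 ^ (r - j), ‖dyadicBlock v j k‖ ≤ c) :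
    ∀ j a ℓ : ℕ, 2 ^ j ∣ a → ℓ < 2 ^ j → a + ℓ ≤ 2 ^ r →
      ‖∑ i ∈ Ioc a (a + ℓ), v i‖ ≤ j * c := by
  have hc : 0 ≤ c := (norm_nonneg _).trans (h 0 (Nat.zero_le r) 0 (by positivity))
  intro j
  induction j with
  | zero =>
    intro a ℓ _ hℓ _
    obtain rfl : ℓ = 0 := by simpa using hℓ
    simp
  | succ j ih =>
    intro a ℓ hdvd hℓ hle
    have hdvd' : 2 ^ j ∣ a := (pow_dvd_pow 2 j.le_succ).trans hdvd
    push_cast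
    rcases lt_or_ge ℓ (2 ^ j) with hsmall | hbig
    · linarith [ih a ℓ hdvd' hsmall hle]
    obtain ⟨k, rfl⟩ := hdvd'
    -- split off the block `(j, k)`; the remaining `ℓ - 2^j < 2^j` terms use smaller scales
    have hjr : j ≤ r := (Nat.pow_le_pow_iff_right (by norm_num : 1 < 2)).mp (by omega)
    have hk : k < 2 ^ (r - j) := by
      have : (k + 1) * 2 ^ j ≤ 2 ^ (r - j) * 2 ^ j := by
        rw [← pow_add, Nat.sub_add_cancel hjr]
        linarith
      exact Nat.le_of_mul_le_mul_right this (by positivity)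
    have hfirst : ‖∑ i ∈ Ioc (2 ^ j * k) (2 ^ j * k + 2 ^ j), v i‖ ≤ c := by
      have := h j hjr k hk
      rwa [dyadicBlock, show k * 2 ^ j = 2 ^ j * k by ring,
        show (k + 1) * 2 ^ j = 2 ^ j * k + 2 ^ j by ring] at this
    have hrest := ih (2 ^ j * k + 2 ^ j) (ℓ - 2 ^ j) (dvd_add (dvd_mul_right _ _) dvd_rfl)
      (by rw [pow_succ] at hℓ; omega) (by omega)
    rw [show 2 ^ j * k + 2 ^ j + (ℓ - 2 ^ j) = 2 ^ j * k + ℓ by omega] at hrest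
    rw [← sum_Ioc_consecutive v (Nat.le_add_right _ _) (by omega : 2 ^ j * k + 2 ^ j ≤ _)]
    linarith [norm_add_le (∑ i ∈ Ioc (2 ^ j * k) (2 ^ j * k + 2 ^ j), v i)
      (∑ i ∈ Ioc (2 ^ j * k + 2 ^ j) (2 ^ j * k + ℓ), v i)]

theorem norm_sum_Ioc_le_of_norm_dyadicBlock_le {v : ℕ → E} {r : ℕ} {c : ℝ}
    (h : ∀ j ≤ r, ∀ k < 2 ^ (r - j), ‖dyadicBlock v j k‖ ≤ c) {ℓ : ℕ} (hℓ : ℓ ≤ 2 ^ r) :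
    ‖∑ i ∈ Ioc 0 ℓ, v i‖ ≤ (r + 1) * c := by
  simpa using norm_sum_Ioc_le_of_norm_dyadicBlock_le_of_dvd h (r + 1) 0 ℓ (dvd_zero _)
    (by rw [pow_succ]; have := r.one_le_two_pow; omega) (by simpa using hℓ)

theorem measureReal_exists_lt_norm_sum_Ioc_le {Ω : Type*} [MeasurableSpace Ω]
    (P : Measure Ω) [IsFiniteMeasure P] (V : ℕ → Ω → E) (r : ℕ) {c b : ℝ}
    (hblock : ∀ j ≤ r, ∀ k < 2 ^ (r - j),
      P.real {ω | c < ‖dyadicBlock (V · ω) j k‖} ≤ 2 ^ j * b) :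
    P.real {ω | ∃ ℓ ≤ 2 ^ r, (r + 1) * c < ‖∑ i ∈ Ioc 0 ℓ, V i ω‖}
      ≤ (r + 1) * 2 ^ r * b := by
  have hcover : {ω | ∃ ℓ ≤ 2 ^ r, (r + 1) * c < ‖∑ i ∈ Ioc 0 ℓ, V i ω‖}
      ⊆ ⋃ j ∈ range (r + 1), ⋃ k ∈ range (2 ^ (r - j)),
          {ω | c < ‖dyadicBlock (V · ω) j k‖} := by
    rintro ω ⟨ℓ, hℓ, hlt⟩
    by_contra hω
    simp only [Set.mem_iUnion, Set.mem_ofPred_eq, mem_range, not_exists, not_lt] at hω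
    exact hlt.not_ge <| norm_sum_Ioc_le_of_norm_dyadicBlock_le
      (fun j hj k hk => hω j (Nat.lt_succ_of_le hj) k hk) hℓ
  calc P.real {ω | ∃ ℓ ≤ 2 ^ r, (r + 1) * c < ‖∑ i ∈ Ioc 0 ℓ, V i ω‖}
      ≤ ∑ j ∈ range (r + 1), ∑ k ∈ range (2 ^ (r - j)),
          P.real {ω | c < ‖dyadicBlock (V · ω) j k‖} :=
        (measureReal_mono hcover (measure_ne_top P _)).trans <|
          (measureReal_biUnion_finset_le _ _).trans <|
            sum_le_sum fun j _ => measureReal_biUnion_finset_le _ _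
    _ ≤ ∑ j ∈ range (r + 1), ∑ k ∈ range (2 ^ (r - j)), (2 : ℝ) ^ j * b := by
        gcongr with j hj k hk
        exact hblock j (Nat.le_of_lt_succ (mem_range.mp hj)) k (mem_range.mp hk)
    _ = ∑ j ∈ range (r + 1), 2 ^ r * b := by
        refine sum_congr rfl fun j hj => ?_
        rw [sum_const, card_range, nsmul_eq_mul, ← mul_assoc, Nat.cast_pow, Nat.cast_ofNat,
          ← pow_add, Nat.sub_add_cancel (Nat.le_of_lt_succ (mem_range.mp hj))]
    _ = (r + 1) * 2 ^ r * b := by simp [mul_assoc]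

end Dyadic

theorem measureReal_lt_norm_le_integral_norm_sq_div {Ω E : Type*} [MeasurableSpace Ω]
    [NormedAddCommGroup E] {P : Measure Ω} [IsFiniteMeasure P] {X : Ω → E} (hX : MemLp X 2 P)
    {c : ℝ} (hc : 0 < c) :
    P.real {ω | c < ‖X ω‖} ≤ (∫ ω, ‖X ω‖ ^ 2 ∂P) / c ^ 2 := by
  have hsub : {ω | c < ‖X ω‖} ⊆ {ω | c ^ 2 ≤ ‖X ω‖ ^ 2} := fun ω hω =>
    pow_le_pow_left₀ hc.le (le_of_lt hω) 2
  rw [le_div_iff₀ (by positivity), mul_comm]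
  calc c ^ 2 * P.real {ω | c < ‖X ω‖} ≤ c ^ 2 * P.real {ω | c ^ 2 ≤ ‖X ω‖ ^ 2} :=
        mul_le_mul_of_nonneg_left (measureReal_mono hsub) (by positivity)
    _ ≤ ∫ ω, ‖X ω‖ ^ 2 ∂P := mul_meas_ge_le_integral_of_nonneg
        (ae_of_all P fun ω => sq_nonneg ‖X ω‖) (hX.integrable_norm_pow two_ne_zero) _

theorem measureReal_lt_norm_dyadicBlock_le {Ω E : Type*} [MeasurableSpace Ω]
    [NormedAddCommGroup E] {P : Measure Ω} [IsFiniteMeasure P] {V : ℕ → Ω → E}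
    (hV : ∀ i, 1 ≤ i → MemLp (V i) 2 P) {K : ℝ}
    (hK : ∀ a ℓ : ℕ, 1 ≤ ℓ → ∫ ω, ‖∑ i ∈ Ioc a (a + ℓ), V i ω‖ ^ 2 ∂P ≤ K * ℓ)
    {c : ℝ} (hc : 0 < c) (j k : ℕ) :
    P.real {ω | c < ‖dyadicBlock (V · ω) j k‖} ≤ 2 ^ j * (K / c ^ 2) := by
  simp only [dyadicBlock, add_one_mul k]
  have hL2 : MemLp (fun ω => ∑ i ∈ Ioc (k * 2 ^ j) (k * 2 ^ j + 2 ^ j), V i ω) 2 P :=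
    memLp_finsetSum _ fun i hi => hV i (by simp only [mem_Ioc] at hi; omega)
  calc _ ≤ (∫ ω, ‖∑ i ∈ Ioc (k * 2 ^ j) (k * 2 ^ j + 2 ^ j), V i ω‖ ^ 2 ∂P) / c ^ 2 :=
        measureReal_lt_norm_le_integral_norm_sq_div hL2 hc
    _ ≤ K * 2 ^ j / c ^ 2 := by
        gcongr
        exact_mod_cast hK _ _ Nat.one_le_two_pow
    _ = 2 ^ j * (K / c ^ 2) := by ring

/-- Dyadic maximal inequality for Hilbert-valued partial sums: if the
centered, square-integrable `H`-valued random elements `Z_i` satisfy the uniform block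
second-moment bound `𝔼‖∑_{i=m+1}^{m+ℓ} Z_i‖² ≤ K·ℓ`, then for every `r ≥ 1`, `m ≥ 0`,
`ε > 0`, with `U_ℓ = ∑_{i=m+1}^{m+ℓ} Z_i`,
`ℙ(max_{1≤ℓ≤2^r} ‖U_ℓ‖ > ε·2^r) ≤ 4K(r+1)³/(ε²·2^r)`. -/
theorem dyadic_maximal_inequality
    {H : Type*} [NormedAddCommGroup H]
    {Ω : Type*} [MeasurableSpace Ω] (P : Measure Ω) [IsProbabilityMeasure P]
    (Z : ℕ → Ω → H)
    (hZmeas : ∀ i, 1 ≤ i → AEStronglyMeasurable (Z i) P)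
    (hZ2 : ∀ i, 1 ≤ i → Integrable (fun ω => ‖Z i ω‖ ^ 2) P)
    (K : ℝ)
    (hK : ∀ m ℓ : ℕ, 1 ≤ ℓ →
      ∫ ω, ‖∑ i ∈ Finset.Icc (m + 1) (m + ℓ), Z i ω‖ ^ 2 ∂P ≤ K * ℓ)
    (r : ℕ) (m : ℕ) (ε : ℝ) (hε : 0 < ε) :
    (P {ω | ε * 2 ^ r <
        (Finset.Icc 1 (2 ^ r)).sup'
          (Finset.nonempty_Icc.mpr (Nat.one_le_pow r 2 (by norm_num)))
          (fun ℓ => ‖∑ i ∈ Finset.Icc (m + 1) (m + ℓ), Z i ω‖)}).toReal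
      ≤ 4 * K * ((r : ℝ) + 1) ^ 3 / (ε ^ 2 * 2 ^ r) := by
  have hK0 : 0 ≤ K := by
    simpa using (integral_nonneg fun ω => by positivity).trans (hK 0 1 le_rfl)
  have hV (i : ℕ) (hi : 1 ≤ i) : MemLp (Z (m + i)) 2 P :=
    (memLp_two_iff_integrable_sq_norm (hZmeas _ (by omega))).2 (hZ2 _ (by omega))
  have hKV (a ℓ : ℕ) (hℓ : 1 ≤ ℓ) : ∫ ω, ‖∑ i ∈ Ioc a (a + ℓ), Z (m + i) ω‖ ^ 2 ∂P ≤ K * ℓ := by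
    have h := hK (m + a) ℓ hℓ
    rw [Icc_add_one_left_eq_Ioc, add_assoc m a ℓ] at h
    convert h using 5 with ω
    exact sum_Ioc_comp_add_left (Z · ω) m a (a + ℓ)
  set c : ℝ := ε * 2 ^ r / (r + 1)
  have hc : 0 < c := by positivity
  have hrc : (r + 1) * c = ε * 2 ^ r := mul_div_cancel₀ _ (by positivity)
  have hevent : {ω | ε * 2 ^ r < (Icc 1 (2 ^ r)).sup' (nonempty_Icc.mpr (Nat.one_le_pow r 2
        (by norm_num))) (fun ℓ => ‖∑ i ∈ Icc (m + 1) (m + ℓ), Z i ω‖)}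
      ⊆ {ω | ∃ ℓ ≤ 2 ^ r, (r + 1) * c < ‖∑ i ∈ Ioc 0 ℓ, Z (m + i) ω‖} := by
    intro ω hω
    obtain ⟨ℓ, hℓ, hlt⟩ := (lt_sup'_iff _).mp (Set.mem_ofPred_eq ▸ hω)
    refine ⟨ℓ, (mem_Icc.mp hℓ).2, ?_⟩
    rwa [hrc, sum_Ioc_comp_add_left (Z · ω), add_zero, ← Icc_add_one_left_eq_Ioc]
  calc (P _).toReal ≤ P.real {ω | ∃ ℓ ≤ 2 ^ r, (r + 1) * c < ‖∑ i ∈ Ioc 0 ℓ, Z (m + i) ω‖} :=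
        measureReal_mono hevent
    _ ≤ (r + 1) * 2 ^ r * (K / c ^ 2) := measureReal_exists_lt_norm_sum_Ioc_le P _ r
        fun j _ k _ => measureReal_lt_norm_dyadicBlock_le hV hKV hc j k
    _ = K * (r + 1) ^ 3 / (ε ^ 2 * 2 ^ r) := by
        simp only [c]
        field_simp
    _ ≤ 4 * K * ((r : ℝ) + 1) ^ 3 / (ε ^ 2 * 2 ^ r) := by
        gcongr
        linarith
end

section
/- Trace bounds for the long-run covariance: let (Z_k)_{k≥0} be centered random elements of H with 𝔼‖Z_k‖² = 𝔼‖Z_0‖² < ∞ and Var(⟨Z_k, h⟩) = Var(⟨Z_0, h⟩) for every h ∈ H and every k. Suppose there are numbers ρ̄(k) ∈ [0,1] with ∑_{k≥1} ρ̄(k) < ∞ such that for every k ≥ 1 and all f, g ∈ H, |Cov(⟨Z_0, f⟩, ⟨Z_k, g⟩)| ≤ ρ̄(k)·√(Var(⟨Z_0, f⟩)·Var(⟨Z_k, g⟩)). Then for every k ≥ 1, |𝔼⟨Z_0, Z_k⟩| ≤ ρ̄(k)·𝔼‖Z_0‖², and consequently 𝔼‖Z_0‖² + 2·∑_{k=1}^∞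 |𝔼⟨Z_0, Z_k⟩| ≤ 𝔼‖Z_0‖²·(1 + 2·∑_{k=1}^∞ ρ̄(k)) < ∞. -/
open MeasureTheory
open scoped RealInnerProductSpace

noncomputable section

/-- Trace bounds for the long-run covariance: for centered,
square-integrable, second-order stationary `H`-valued random elements with maximal
correlation bounds `ρ̄(k)`, one has `|𝔼⟨Z_0,Z_k⟩| ≤ ρ̄(k)·𝔼‖Z_0‖²` for each `k ≥ 1`, the
series `∑_k |𝔼⟨Z_0,Z_k⟩|` converges, and
`𝔼‖Z_0‖² + 2∑_{k≥1}|𝔼⟨Z_0,Z_k⟩| ≤ 𝔼‖Z_0‖²·(1 + 2∑_{k≥1} ρ̄(k))`. -/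
theorem longrun_trace_bounds
    {H : Type*} [NormedAddCommGroup H] [InnerProductSpace ℝ H] [CompleteSpace H]
    [MeasurableSpace H] [BorelSpace H] [TopologicalSpace.SeparableSpace H]
    {Ω : Type*} [MeasurableSpace Ω] (P : Measure Ω) [IsProbabilityMeasure P]
    (Z : ℕ → Ω → H)
    (hZmeas : ∀ k, AEStronglyMeasurable (Z k) P)
    (hZint : ∀ k, Integrable (Z k) P)
    (hZcentered : ∀ k, ∫ ω, Z k ω ∂P = 0)
    (hZ2 : ∀ k, Integrable (fun ω => ‖Z k ω‖ ^ 2) P)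
    (hZ2stat : ∀ k, ∫ ω, ‖Z k ω‖ ^ 2 ∂P = ∫ ω, ‖Z 0 ω‖ ^ 2 ∂P)
    (hvarstat : ∀ k, ∀ h : H,
      var' P (fun ω => ⟪Z k ω, h⟫) = var' P (fun ω => ⟪Z 0 ω, h⟫))
    (ρ : ℕ → ℝ) (hρ01 : ∀ k, 1 ≤ k → ρ k ∈ Set.Icc (0 : ℝ) 1)
    (hρsum : Summable (fun k : ℕ => ρ (k + 1)))
    (hmix : ∀ k, 1 ≤ k → ∀ f g : H,
      |cov' P (fun ω => ⟪Z 0 ω, f⟫) (fun ω => ⟪Z k ω, g⟫)|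
        ≤ ρ k * Real.sqrt (var' P (fun ω => ⟪Z 0 ω, f⟫)
            * var' P (fun ω => ⟪Z k ω, g⟫))) :
    (∀ k, 1 ≤ k →
      |∫ ω, ⟪Z 0 ω, Z k ω⟫ ∂P| ≤ ρ k * ∫ ω, ‖Z 0 ω‖ ^ 2 ∂P)
    ∧ Summable (fun k : ℕ => |∫ ω, ⟪Z 0 ω, Z (k + 1) ω⟫ ∂P|)
    ∧ (∫ ω, ‖Z 0 ω‖ ^ 2 ∂P) + 2 * ∑' k : ℕ, |∫ ω, ⟪Z 0 ω, Z (k + 1) ω⟫ ∂P|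
        ≤ (∫ ω, ‖Z 0 ω‖ ^ 2 ∂P) * (1 + 2 * ∑' k : ℕ, ρ (k + 1)) := by
  classical
  set T := ∫ ω, ‖Z 0 ω‖ ^ 2 ∂P with hTdef
  have hTnn : 0 ≤ T := integral_nonneg fun ω => sq_nonneg _
  -- a countable Hilbert basis
  obtain ⟨w, b, hbcoe⟩ := exists_hilbertBasis ℝ H
  have horth : Orthonormal ℝ (Subtype.val : w → H) := hbcoe ▸ b.orthonormal
  have hcw : Countable w := by
    refine Pairwise.countable_of_isOpen_disjoint (ι := w)
      (s := fun i => Metric.ball (i : H) (1 / 2)) ?_ (fun i => Metric.isOpen_ball)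
      (fun i => Metric.nonempty_ball.2 (by norm_num))
    intro i j hij
    refine Metric.ball_disjoint_ball ?_
    have hinner : ⟪(Subtype.val : w → H) i, (Subtype.val : w → H) j⟫ = 0 := horth.2 hij
    have hni : ‖(i : H)‖ = 1 := horth.1 i
    have hnj : ‖(j : H)‖ = 1 := horth.1 j
    have hsq : ‖(i : H) - (j : H)‖ ^ 2 = 2 := by
      rw [@norm_sub_sq_real]
      rw [hinner, hni, hnj]; ring
    have hd : dist (i : H) (j : H) = ‖(i : H) - (j : H)‖ := dist_eq_norm _ _
    nlinarith [dist_nonneg (x := (i : H)) (y := (j : H)), norm_nonneg ((i : H) - (j : H))]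
  -- basic facts
  have hnorm1 : ∀ i : w, ‖(i : H)‖ = 1 := fun i => horth.1 i
  have hmean : ∀ k (h : H), ∫ ω, ⟪Z k ω, h⟫ ∂P = 0 := by
    intro k h
    have h1 : ∫ ω, ⟪h, Z k ω⟫ ∂P = ⟪h, ∫ ω, Z k ω ∂P⟫ := integral_inner (hZint k) h
    rw [hZcentered k, inner_zero_right] at h1
    calc ∫ ω, ⟪Z k ω, h⟫ ∂P = ∫ ω, ⟪h, Z k ω⟫ ∂P := by
          simp_rw [real_inner_comm]
      _ = 0 := h1
  have hcov : ∀ (k l : ℕ) (f g : H),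
      cov' P (fun ω => ⟪Z k ω, f⟫) (fun ω => ⟪Z l ω, g⟫)
        = ∫ ω, ⟪Z k ω, f⟫ * ⟪Z l ω, g⟫ ∂P := by
    intro k l f g
    simp only [cov', hmean, sub_zero]
  have hvar : ∀ k (h : H),
      var' P (fun ω => ⟪Z k ω, h⟫) = ∫ ω, ⟪Z k ω, h⟫ ^ 2 ∂P := by
    intro k h
    rw [var', hcov]
    simp_rw [sq]
  -- measurability and integrability
  have hinnermeas : ∀ k (h : H), AEStronglyMeasurable (fun ω => ⟪Z k ω, h⟫) P :=
    fun k h => (hZmeas k).inner aestronglyMeasurable_const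
  have hprodint : ∀ (k l : ℕ) (f g : H), ‖f‖ ≤ 1 → ‖g‖ ≤ 1 →
      Integrable (fun ω => ⟪Z k ω, f⟫ * ⟪Z l ω, g⟫) P := by
    intro k l f g hf hg
    refine ((hZ2 k).add (hZ2 l)).mono
      ((hinnermeas k f).mul (hinnermeas l g)) (ae_of_all _ fun ω => ?_)
    have h1 : |⟪Z k ω, f⟫| ≤ ‖Z k ω‖ := by
      calc |⟪Z k ω, f⟫| ≤ ‖Z k ω‖ * ‖f‖ := abs_real_inner_le_norm _ _
        _ ≤ ‖Z k ω‖ * 1 := by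
            exact mul_le_mul_of_nonneg_left hf (norm_nonneg _)
        _ = ‖Z k ω‖ := mul_one _
    have h2 : |⟪Z l ω, g⟫| ≤ ‖Z l ω‖ := by
      calc |⟪Z l ω, g⟫| ≤ ‖Z l ω‖ * ‖g‖ := abs_real_inner_le_norm _ _
        _ ≤ ‖Z l ω‖ * 1 := by
            exact mul_le_mul_of_nonneg_left hg (norm_nonneg _)
        _ = ‖Z l ω‖ := mul_one _
    rw [Real.norm_eq_abs, Real.norm_eq_abs, abs_mul]
    have h3 : |⟪Z k ω, f⟫| * |⟪Z l ω, g⟫| ≤ ‖Z k ω‖ * ‖Z l ω‖ :=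
      mul_le_mul h1 h2 (abs_nonneg _) (norm_nonneg _)
    have h4 : ‖Z k ω‖ * ‖Z l ω‖ ≤ ‖Z k ω‖ ^ 2 + ‖Z l ω‖ ^ 2 := by
      nlinarith [sq_nonneg (‖Z k ω‖ - ‖Z l ω‖), norm_nonneg (Z k ω), norm_nonneg (Z l ω)]
    have h5 : (0 : ℝ) ≤ ‖Z k ω‖ ^ 2 + ‖Z l ω‖ ^ 2 := by positivity
    calc |⟪Z k ω, f⟫| * |⟪Z l ω, g⟫| ≤ ‖Z k ω‖ ^ 2 + ‖Z l ω‖ ^ 2 := h3.trans h4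
      _ ≤ |‖Z k ω‖ ^ 2 + ‖Z l ω‖ ^ 2| := le_abs_self _
  have hsq : ∀ k (i : w), Integrable (fun ω => ⟪Z k ω, (i : H)⟫ ^ 2) P := by
    intro k i
    have := hprodint k k (i : H) (i : H) (le_of_eq (hnorm1 i)) (le_of_eq (hnorm1 i))
    simpa [sq] using this
  have hZZint : ∀ k, Integrable (fun ω => ⟪Z 0 ω, Z k ω⟫) P := by
    intro k
    refine ((hZ2 0).add (hZ2 k)).mono
      ((hZmeas 0).inner (hZmeas k)) (ae_of_all _ fun ω => ?_)
    rw [Real.norm_eq_abs, Real.norm_eq_abs]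
    have h1 : |⟪Z 0 ω, Z k ω⟫| ≤ ‖Z 0 ω‖ * ‖Z k ω‖ := abs_real_inner_le_norm _ _
    have h2 : ‖Z 0 ω‖ * ‖Z k ω‖ ≤ ‖Z 0 ω‖ ^ 2 + ‖Z k ω‖ ^ 2 := by
      nlinarith [sq_nonneg (‖Z 0 ω‖ - ‖Z k ω‖), norm_nonneg (Z 0 ω), norm_nonneg (Z k ω)]
    calc |⟪Z 0 ω, Z k ω⟫| ≤ ‖Z 0 ω‖ ^ 2 + ‖Z k ω‖ ^ 2 := h1.trans h2
      _ ≤ |‖Z 0 ω‖ ^ 2 + ‖Z k ω‖ ^ 2| := le_abs_self _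
  -- Bessel
  set A : ℕ → w → ℝ := fun k i => ∫ ω, ⟪Z k ω, (i : H)⟫ ^ 2 ∂P with hAdef
  have hAnn : ∀ k (i : w), 0 ≤ A k i := fun k i => integral_nonneg fun ω => sq_nonneg _
  have hbessel : ∀ k, ∀ s : Finset w,
      ∑ i ∈ s, A k i ≤ ∫ ω, ‖Z k ω‖ ^ 2 ∂P := by
    intro k s
    rw [hAdef]
    rw [← integral_finset_sum s (fun i _ => hsq k i)]
    refine integral_mono (integrable_finset_sum s fun i _ => hsq k i) (hZ2 k)
      (fun ω => ?_)
    have h := horth.sum_inner_products_le (𝕜 := ℝ) (Z k ω) (s := s)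
    simpa [Real.norm_eq_abs, sq_abs, real_inner_comm] using h
  have hAsummable : ∀ k, Summable (A k) := fun k =>
    summable_of_sum_le (hAnn k) (hbessel k)
  have hAtsum_le : ∑' i, A 0 i ≤ T := Summable.tsum_le_of_sum_le (hAsummable 0) (hbessel 0)
  -- the key bound
  have key : ∀ k, 1 ≤ k → |∫ ω, ⟪Z 0 ω, Z k ω⟫ ∂P| ≤ ρ k * T := by
    intro k hk
    obtain ⟨hρ0, hρ1⟩ := hρ01 k hk
    set F : w → Ω → ℝ := fun i ω => ⟪Z 0 ω, (i : H)⟫ * ⟪Z k ω, (i : H)⟫ with hFdef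
    have hFint : ∀ i, Integrable (F i) P := fun i =>
      hprodint 0 k (i : H) (i : H) (le_of_eq (hnorm1 i)) (le_of_eq (hnorm1 i))
    -- per-coordinate bound
    have hFbound : ∀ i : w, |∫ ω, F i ω ∂P| ≤ ρ k * A 0 i := by
      intro i
      have hm := hmix k hk (i : H) (i : H)
      rw [hvarstat k (i : H)] at hm
      rw [hcov 0 k (i : H) (i : H)] at hm
      have hv0 : 0 ≤ var' P (fun ω => ⟪Z 0 ω, (i : H)⟫) := by
        rw [hvar]; exact integral_nonneg fun ω => sq_nonneg _
      rw [Real.sqrt_mul_self hv0] at hm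
      rw [hvar 0 (i : H)] at hm
      exact hm
    -- summability of the norms of the coordinate integrals
    have hFnorm_le : ∀ i : w, ∫ ω, ‖F i ω‖ ∂P ≤ A 0 i + A k i := by
      intro i
      rw [hAdef]
      simp only
      rw [← integral_add (hsq 0 i) (hsq k i)]
      refine integral_mono (hFint i).norm ((hsq 0 i).add (hsq k i)) (fun ω => ?_)
      rw [Real.norm_eq_abs, hFdef]
      have := abs_mul (⟪Z 0 ω, (i : H)⟫) (⟪Z k ω, (i : H)⟫)
      nlinarith [sq_nonneg (|⟪Z 0 ω, (i : H)⟫| - |⟪Z k ω, (i : H)⟫|),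
        abs_nonneg (⟪Z 0 ω, (i : H)⟫), abs_nonneg (⟪Z k ω, (i : H)⟫),
        sq_abs (⟪Z 0 ω, (i : H)⟫), sq_abs (⟪Z k ω, (i : H)⟫)]
    have hFS : Summable fun i : w => ∫ ω, ‖F i ω‖ ∂P :=
      Summable.of_nonneg_of_le
        (fun i => integral_nonneg fun ω => norm_nonneg _)
        hFnorm_le ((hAsummable 0).add (hAsummable k))
    -- pointwise Parseval
    have hpar : ∀ ω, (∑' i : w, F i ω) = ⟪Z 0 ω, Z k ω⟫ := by
      intro ω
      rw [← b.tsum_inner_mul_inner (Z 0 ω) (Z k ω)]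
      congr 1
      funext i
      rw [hbcoe, hFdef]
      simp [real_inner_comm]
    have hinterchange : ∑' i : w, ∫ ω, F i ω ∂P = ∫ ω, ⟪Z 0 ω, Z k ω⟫ ∂P := by
      rw [integral_tsum_of_summable_integral_norm hFint hFS]
      exact integral_congr_ae (ae_of_all _ fun ω => hpar ω)
    have habs_summable : Summable fun i : w => |∫ ω, F i ω ∂P| :=
      Summable.of_nonneg_of_le (fun i => abs_nonneg _) hFbound
        ((hAsummable 0).mul_left (ρ k))
    calc |∫ ω, ⟪Z 0 ω, Z k ω⟫ ∂P| = |∑' i : w, ∫ ω, F i ω ∂P| := by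
          rw [hinterchange]
      _ ≤ ∑' i : w, |∫ ω, F i ω ∂P| := by
          simpa [Real.norm_eq_abs] using
            norm_tsum_le_tsum_norm (f := fun i : w => ∫ ω, F i ω ∂P)
              (by simpa [Real.norm_eq_abs] using habs_summable)
      _ ≤ ∑' i : w, ρ k * A 0 i :=
          Summable.tsum_le_tsum hFbound habs_summable ((hAsummable 0).mul_left (ρ k))
      _ = ρ k * ∑' i : w, A 0 i := tsum_mul_left
      _ ≤ ρ k * T := mul_le_mul_of_nonneg_left hAtsum_le hρ0
  refine ⟨key, ?_, ?_⟩
  · exact Summable.of_nonneg_of_le (fun k => abs_nonneg _)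
      (fun k => key (k + 1) (Nat.succ_le_succ (Nat.zero_le k)))
      (hρsum.mul_right T)
  · have hsum2 : Summable (fun k : ℕ => |∫ ω, ⟪Z 0 ω, Z (k + 1) ω⟫ ∂P|) :=
      Summable.of_nonneg_of_le (fun k => abs_nonneg _)
        (fun k => key (k + 1) (Nat.succ_le_succ (Nat.zero_le k)))
        (hρsum.mul_right T)
    have h1 : ∑' k : ℕ, |∫ ω, ⟪Z 0 ω, Z (k + 1) ω⟫ ∂P|
        ≤ (∑' k : ℕ, ρ (k + 1)) * T := by
      calc ∑' k : ℕ, |∫ ω, ⟪Z 0 ω, Z (k + 1) ω⟫ ∂P|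
          ≤ ∑' k : ℕ, ρ (k + 1) * T :=
            Summable.tsum_le_tsum (fun k => key (k + 1) (Nat.succ_le_succ (Nat.zero_le k)))
              hsum2 (hρsum.mul_right T)
        _ = (∑' k : ℕ, ρ (k + 1)) * T := tsum_mul_right
    nlinarith [h1]

end
end
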